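/- arXiv:1710.01325 — 9 statements merged into one kernel-verified Lean document; each statement's English description precedes it below -/
import Mathlib

section
/- For any binary sequence generated by the Ehrenfeucht–Mycielski rule, the first two occurrences of any finite binary word B as a substring are followed by complementary bits (i.e., if the first occurrence of B is followed by bit a, then the second occurrence of B is followed by bit 1−a). -/
/-- The word `w` occurs in the binary sequence `x` starting at position `i`. -/
def OccursAt (x : ℕ → Bool) (w : List Bool) (i : ℕ) : Prop :=
  ∀ k : Fin w.length, x (i + k) = w.get k

/-- At generation step `n` (the first `n` bits `x 0, …, x (n-1)` are known),
the suffix of length `l` of the current prefix matches an earlier occurrence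
starting at `j` (so the bit following that earlier occurrence is known). -/
def MatchAt (x : ℕ → Bool) (n l j : ℕ) : Prop :=
  0 < l ∧ l ≤ n ∧ j + l < n ∧ ∀ k < l, x (j + k) = x (n - l + k)

/-- `x` is generated by the Ehrenfeucht–Mycielski rule: it starts `0,1,0` and,
at each step, the longest suffix of the current prefix that occurred before is
found, its last previous occurrence is located, and the appended bit is the
complement of the bit following that previous occurrence. -/
def IsEM (x : ℕ → Bool) : Prop :=
  x 0 = false ∧ x 1 = true ∧ x 2 = false ∧
  ∀ n, 3 ≤ n → ∃ l j, MatchAt x n l j ∧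
    (∀ l' j', MatchAt x n l' j' → l' ≤ l) ∧
    (∀ j', MatchAt x n l j' → j' ≤ j) ∧
    x n = !x (j + l)

/-- The first two occurrences of any finite nonempty binary word in the
Ehrenfeucht–Mycielski sequence are followed by complementary bits. -/
theorem em_first_two_occurrences_followed_by_complementary_bits
    (x : ℕ → Bool) (hx : IsEM x) (B : List Bool) (hB : B ≠ [])
    (i j : ℕ) (hij : i < j)
    (hi : OccursAt x B i) (hj : OccursAt x B j)
    (hfirst : ∀ k, k < i → ¬ OccursAt x B k)
    (hsecond : ∀ k, i < k → k < j → ¬ OccursAt x B k) :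
    x (j + B.length) = !x (i + B.length) := by
  obtain ⟨h0, h1, h2, hrule⟩ := hx
  have hBlen : 0 < B.length := List.length_pos_iff.mpr hB
  have hmatch : MatchAt x (j + B.length) B.length i := by
    refine ⟨hBlen, by omega, by omega, fun k hk => ?_⟩
    have e : j + B.length - B.length + k = j + k := by omega
    rw [e, hi ⟨k, hk⟩, hj ⟨k, hk⟩]
  have hn3 : 3 ≤ j + B.length := by
    by_contra h
    have hj1 : j = 1 := by omega
    have hB1 : B.length = 1 := by omega
    have hi0 : i = 0 := by omega
    have e1 := hi ⟨0, by omega⟩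
    have e2 := hj ⟨0, by omega⟩
    simp [hi0, hj1] at e1 e2
    rw [h0] at e1; rw [h1] at e2
    rw [← e1] at e2; exact absurd e2 (by simp)
  obtain ⟨l, j', hM, hlmax, hjmax, hbit⟩ := hrule (j + B.length) hn3
  have hlB : B.length ≤ l := hlmax _ _ hmatch
  obtain ⟨hl0, hln, hjl, hMk⟩ := hM
  have hm : OccursAt x B (j' + l - B.length) := by
    intro k
    have hk := hMk (l - B.length + k) (by omega)
    have e1 : j' + l - B.length + (k : ℕ) = j' + (l - B.length + k) := by omega
    have e2 : j + B.length - l + (l - B.length + k) = j + k := by omega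
    rw [e1, hk, e2]
    exact hj k
  have heq : j' + l - B.length = i := by
    by_contra hne
    rcases Nat.lt_or_ge (j' + l - B.length) i with h | h
    · exact hfirst _ h hm
    · exact hsecond _ (by omega) (by omega) hm
  have : j' + l = i + B.length := by omega
  rw [this] at hbit
  exact hbit
end

section
/- In the Ehrenfeucht–Mycielski sequence, for any nonempty binary word B and bits a₁, a₂, the first five occurrences of B cannot be extended (by the following one or two bits) as B(1−a₁), B a₁ a₂, B a₁ (1−a₂), B a₁ a₂, B a₁ a₂ in this order. -/
/-- `p₁ < p₂ < p₃ < p₄ < p₅` are the positions of the first five occurrences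
of `B` in `x`. -/
def FirstFiveOccs (x : ℕ → Bool) (B : List Bool) (p₁ p₂ p₃ p₄ p₅ : ℕ) : Prop :=
  p₁ < p₂ ∧ p₂ < p₃ ∧ p₃ < p₄ ∧ p₄ < p₅ ∧
  OccursAt x B p₁ ∧ OccursAt x B p₂ ∧ OccursAt x B p₃ ∧ OccursAt x B p₄ ∧
  OccursAt x B p₅ ∧
  ∀ q, q < p₅ → OccursAt x B q → q = p₁ ∨ q = p₂ ∨ q = p₃ ∨ q = p₄

/-- `p₁ < p₂ < p₃ < p₄` are the positions of the first four occurrences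
of `B` in `x`. -/
def FirstFourOccs (x : ℕ → Bool) (B : List Bool) (p₁ p₂ p₃ p₄ : ℕ) : Prop :=
  p₁ < p₂ ∧ p₂ < p₃ ∧ p₃ < p₄ ∧
  OccursAt x B p₁ ∧ OccursAt x B p₂ ∧ OccursAt x B p₃ ∧ OccursAt x B p₄ ∧
  ∀ q, q < p₄ → OccursAt x B q → q = p₁ ∨ q = p₂ ∨ q = p₃

/-- `B` is a good word: the bits immediately preceding its first two
occurrences are complementary (an occurrence at position `0` counts). -/
def GoodWord (x : ℕ → Bool) (B : List Bool) : Prop :=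
  ∃ i j, i < j ∧ OccursAt x B i ∧ OccursAt x B j ∧
    (∀ k, k < j → OccursAt x B k → k = i) ∧
    (i = 0 ∨ x (i - 1) = !x (j - 1))

/-- Lemma 4.1: the first five occurrences of a nonempty word `B` in the EM
sequence cannot be extended by the following one or two bits as
`B(1-a₁), Ba₁a₂, Ba₁(1-a₂), Ba₁a₂, Ba₁a₂`. -/
theorem em_lemma_4_1
    (x : ℕ → Bool) (hx : IsEM x) (B : List Bool) (hB : B ≠ [])
    (a₁ a₂ : Bool) (p₁ p₂ p₃ p₄ p₅ : ℕ)
    (h5 : FirstFiveOccs x B p₁ p₂ p₃ p₄ p₅) :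
    ¬ (x (p₁ + B.length) = !a₁ ∧
       x (p₂ + B.length) = a₁ ∧ x (p₂ + B.length + 1) = a₂ ∧
       x (p₃ + B.length) = a₁ ∧ x (p₃ + B.length + 1) = !a₂ ∧
       x (p₄ + B.length) = a₁ ∧ x (p₄ + B.length + 1) = a₂ ∧
       x (p₅ + B.length) = a₁ ∧ x (p₅ + B.length + 1) = a₂) := by
  classical
  rintro ⟨e1, e2a, e2b, e3a, e3b, e4a, e4b, e5a, e5b⟩
  obtain ⟨hx0, hx1, hx2, hstep⟩ := hx
  obtain ⟨hp12, hp23, hp34, hp45, o1, o2, o3, o4, o5, hfirst⟩ := h5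
  set L := B.length with hLdef
  have hL : 0 < L := by rw [hLdef]; exact List.length_pos_iff.mpr hB
  have hne_not : ∀ b : Bool, b ≠ !b := by decide
  have bool_flip : ∀ u v : Bool, u = !v → v = !u := by decide
  have hof : ∀ q p, OccursAt x B p → (∀ k, k < L → x (q + k) = x (p + k)) →
      OccursAt x B q := by
    intro q p hp h k
    exact (h k.val k.isLt).trans (hp k)
  have hoe : ∀ p q, OccursAt x B p → OccursAt x B q → ∀ k, k < L →
      x (p + k) = x (q + k) := by
    intro p q hp hq k hk
    exact (hp ⟨k, hk⟩).trans (hq ⟨k, hk⟩).symm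
  have hcopy : ∀ (n l j p t : ℕ), MatchAt x n l j → L + t ≤ l → p + L + t = n →
      OccursAt x B p → ∃ q, OccursAt x B q ∧ q + L + t = j + l := by
    intro n l j p t hm hLl hpn hp
    obtain ⟨hl0, hln, hjln, hag⟩ := hm
    refine ⟨j + l - L - t, hof _ p hp ?_, by omega⟩
    intro k hk
    have h := hag (l - L - t + k) (by omega)
    rw [show j + (l - L - t + k) = (j + l - L - t) + k from by omega,
        show n - l + (l - L - t + k) = p + k from by omega] at h
    exact h
  -- ### Step A : the step generating x (p₅ + L + 1) = a₂
  obtain ⟨l5, j5, hm5, hlmax5, hjmax5, hbit5⟩ := hstep (p₅ + L + 1) (by omega)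
  have hm5a : 0 < l5 := hm5.1
  have hm5b : l5 ≤ p₅ + L + 1 := hm5.2.1
  have hm5c : j5 + l5 < p₅ + L + 1 := hm5.2.2.1
  have hl5L : L + 1 ≤ l5 := by
    apply hlmax5 (L + 1) p₃
    refine ⟨by omega, by omega, by omega, ?_⟩
    intro k hk
    rw [show p₅ + L + 1 - (L + 1) + k = p₅ + k from by omega]
    rcases Nat.lt_or_ge k L with h | h
    · exact hoe p₃ p₅ o3 o5 k h
    · have hkL : k = L := by omega
      subst hkL
      rw [e3a, e5a]
  obtain ⟨q5, hq5occ, hq5⟩ := hcopy _ _ _ p₅ 1 hm5 (by omega) (by omega) o5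
  have hq5a : x (q5 + L) = a₁ := by
    have h := hm5.2.2.2 (l5 - 1) (by omega)
    rw [show j5 + (l5 - 1) = q5 + L from by omega,
        show p₅ + L + 1 - l5 + (l5 - 1) = p₅ + L from by omega] at h
    rw [h, e5a]
  have hq5b : x (q5 + L + 1) = !a₂ := by
    rw [e5b, show j5 + l5 = q5 + L + 1 from by omega] at hbit5
    exact bool_flip _ _ hbit5
  have hq5p : q5 = p₃ := by
    rcases hfirst q5 (by omega) hq5occ with h | h | h | h
    · exfalso; rw [h, e1] at hq5a; exact hne_not a₁ hq5a.symm
    · exfalso; rw [h, e2b] at hq5b; exact hne_not a₂ hq5b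
    · exact h
    · exfalso; rw [h, e4b] at hq5b; exact hne_not a₂ hq5b
  have hq5c : p₃ + L + 1 = j5 + l5 := by omega
  have hl5le : l5 ≤ p₃ + L + 1 := by omega
  have hcf : ∀ s, s < l5 → x (p₃ + L - s) = x (p₅ + L - s) := by
    intro s hs
    have h := hm5.2.2.2 (l5 - 1 - s) (by omega)
    rw [show j5 + (l5 - 1 - s) = p₃ + L - s from by omega,
        show p₅ + L + 1 - l5 + (l5 - 1 - s) = p₅ + L - s from by omega] at h
    exact h
  -- ### Q : the longest suffix agreement between prefixes ending at p₄+L and p₅+L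
  set Q := Nat.findGreatest
      (fun l => ∀ k, k < l → x (p₄ + L + 1 - l + k) = x (p₅ + L + 1 - l + k)) l5
    with hQdef
  have hPL1 : ∀ k, k < L + 1 → x (p₄ + L + 1 - (L + 1) + k) = x (p₅ + L + 1 - (L + 1) + k) := by
    intro k hk
    rw [show p₄ + L + 1 - (L + 1) + k = p₄ + k from by omega,
        show p₅ + L + 1 - (L + 1) + k = p₅ + k from by omega]
    rcases Nat.lt_or_ge k L with h | h
    · exact hoe p₄ p₅ o4 o5 k h
    · have hkL : k = L := by omega
      subst hkL
      rw [e4a, e5a]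
  have hQge : L + 1 ≤ Q := Nat.le_findGreatest (by omega) hPL1
  have hQle : Q ≤ l5 := Nat.findGreatest_le l5
  have hPQ : ∀ k, k < Q → x (p₄ + L + 1 - Q + k) = x (p₅ + L + 1 - Q + k) := by
    have h := Nat.findGreatest_spec
      (P := fun l => ∀ k, k < l → x (p₄ + L + 1 - l + k) = x (p₅ + L + 1 - l + k))
      (n := l5) (m := L + 1) (by omega) hPL1
    rw [← hQdef] at h
    exact h
  have hQlt : Q < l5 := by
    rcases Nat.lt_or_ge Q l5 with h | h
    · exact h
    · exfalso
      have hQeq : Q = l5 := le_antisymm hQle h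
      have hmm : MatchAt x (p₅ + L + 1) l5 (p₄ + L + 1 - l5) := by
        refine ⟨by omega, by omega, by omega, ?_⟩
        intro k hk
        have h2 := hPQ k (by omega)
        rw [hQeq] at h2
        exact h2
      have := hjmax5 _ hmm
      omega
  have hQmax : ¬ (∀ k, k < Q + 1 →
      x (p₄ + L + 1 - (Q + 1) + k) = x (p₅ + L + 1 - (Q + 1) + k)) := by
    have h := Nat.findGreatest_is_greatest
      (P := fun l => ∀ k, k < l → x (p₄ + L + 1 - l + k) = x (p₅ + L + 1 - l + k))
      (n := l5) (k := Q + 1) (by omega) (by omega)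
    exact h
  have hdf : ∀ s, s < Q → x (p₄ + L - s) = x (p₅ + L - s) := by
    intro s hs
    have h := hPQ (Q - 1 - s) (by omega)
    rw [show p₄ + L + 1 - Q + (Q - 1 - s) = p₄ + L - s from by omega,
        show p₅ + L + 1 - Q + (Q - 1 - s) = p₅ + L - s from by omega] at h
    exact h
  have hne : x (p₄ + L - Q) ≠ x (p₅ + L - Q) := by
    intro hcontra
    apply hQmax
    intro k hk
    rcases Nat.eq_zero_or_pos k with h0 | h0
    · subst h0
      rw [show p₄ + L + 1 - (Q + 1) + 0 = p₄ + L - Q from by omega,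
          show p₅ + L + 1 - (Q + 1) + 0 = p₅ + L - Q from by omega]
      exact hcontra
    · have h := hPQ (k - 1) (by omega)
      rw [show p₄ + L + 1 - (Q + 1) + k = p₄ + L + 1 - Q + (k - 1) from by omega,
          show p₅ + L + 1 - (Q + 1) + k = p₅ + L + 1 - Q + (k - 1) from by omega]
      exact h
  -- ### Step D : the step generating x (p₅ + L) = a₁
  obtain ⟨lD, jD, hmD, hlmaxD, hjmaxD, hbitD⟩ := hstep (p₅ + L) (by omega)
  have hmDa : 0 < lD := hmD.1
  have hmDb : lD ≤ p₅ + L := hmD.2.1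
  have hmDc : jD + lD < p₅ + L := hmD.2.2.1
  have hlD1 : l5 - 1 ≤ lD := by
    apply hlmaxD (l5 - 1) (p₃ + L + 1 - l5)
    refine ⟨by omega, by omega, by omega, ?_⟩
    intro k hk
    have h := hm5.2.2.2 k (by omega)
    rw [show j5 + k = p₃ + L + 1 - l5 + k from by omega] at h
    rw [show p₅ + L - (l5 - 1) + k = p₅ + L + 1 - l5 + k from by omega]
    exact h
  obtain ⟨qD, hqDocc, hqDL⟩ := hcopy _ _ _ p₅ 0 hmD (by omega) (by omega) o5
  have hqDb : x (qD + L) = !a₁ := by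
    rw [e5a, show jD + lD = qD + L from by omega] at hbitD
    exact bool_flip _ _ hbitD
  have hqDp : qD = p₁ := by
    rcases hfirst qD (by omega) hqDocc with h | h | h | h
    · exact h
    · exfalso; rw [h, e2a] at hqDb; exact hne_not a₁ hqDb
    · exfalso; rw [h, e3a] at hqDb; exact hne_not a₁ hqDb
    · exfalso; rw [h, e4a] at hqDb; exact hne_not a₁ hqDb
  have hqDc : p₁ + L = jD + lD := by omega
  have hlDge : l5 ≤ lD := by
    by_contra hlt
    push_neg at hlt
    have hmm : MatchAt x (p₅ + L) lD (p₃ + L - lD) := by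
      refine ⟨by omega, by omega, by omega, ?_⟩
      intro k hk
      have h1 := hcf (lD - k) (by omega)
      rw [show p₃ + L - (lD - k) = p₃ + L - lD + k from by omega,
          show p₅ + L - (lD - k) = p₅ + L - lD + k from by omega] at h1
      exact h1
    have := hjmaxD _ hmm
    omega
  have haf : ∀ s, s < l5 → x (p₁ + L - 1 - s) = x (p₅ + L - 1 - s) := by
    intro s hs
    have h := hmD.2.2.2 (lD - 1 - s) (by omega)
    rw [show jD + (lD - 1 - s) = p₁ + L - 1 - s from by omega,
        show p₅ + L - lD + (lD - 1 - s) = p₅ + L - 1 - s from by omega] at h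
    exact h
  -- ### Step C : the step generating x (p₄ + L) = a₁
  obtain ⟨lC, jC, hmC, hlmaxC, hjmaxC, hbitC⟩ := hstep (p₄ + L) (by omega)
  have hmCa : 0 < lC := hmC.1
  have hmCb : lC ≤ p₄ + L := hmC.2.1
  have hmCc : jC + lC < p₄ + L := hmC.2.2.1
  have hlC1 : Q - 1 ≤ lC := by
    apply hlmaxC (Q - 1) (p₃ + L + 1 - Q)
    refine ⟨by omega, by omega, by omega, ?_⟩
    intro k hk
    have h1 := hcf (Q - 1 - k) (by omega)
    have h2 := hdf (Q - 1 - k) (by omega)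
    rw [show p₃ + L - (Q - 1 - k) = p₃ + L + 1 - Q + k from by omega] at h1
    rw [show p₄ + L - (Q - 1 - k) = p₄ + L - (Q - 1) + k from by omega] at h2
    exact h1.trans h2.symm
  obtain ⟨qC, hqCocc, hqCL⟩ := hcopy _ _ _ p₄ 0 hmC (by omega) (by omega) o4
  have hqCb : x (qC + L) = !a₁ := by
    rw [e4a, show jC + lC = qC + L from by omega] at hbitC
    exact bool_flip _ _ hbitC
  have hqCp : qC = p₁ := by
    rcases hfirst qC (by omega) hqCocc with h | h | h | h
    · exact h
    · exfalso; rw [h, e2a] at hqCb; exact hne_not a₁ hqCb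
    · exfalso; rw [h, e3a] at hqCb; exact hne_not a₁ hqCb
    · omega
  have hqCc : p₁ + L = jC + lC := by omega
  have hlCge : Q ≤ lC := by
    by_contra hlt
    push_neg at hlt
    have hmm : MatchAt x (p₄ + L) lC (p₃ + L - lC) := by
      refine ⟨by omega, by omega, by omega, ?_⟩
      intro k hk
      have h1 := hcf (lC - k) (by omega)
      have h2 := hdf (lC - k) (by omega)
      rw [show p₃ + L - (lC - k) = p₃ + L - lC + k from by omega] at h1
      rw [show p₄ + L - (lC - k) = p₄ + L - lC + k from by omega] at h2
      exact h1.trans h2.symm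
    have := hjmaxC _ hmm
    omega
  have had : ∀ s, s < Q → x (p₁ + L - 1 - s) = x (p₄ + L - 1 - s) := by
    intro s hs
    have h := hmC.2.2.2 (lC - 1 - s) (by omega)
    rw [show jC + (lC - 1 - s) = p₁ + L - 1 - s from by omega,
        show p₄ + L - lC + (lC - 1 - s) = p₄ + L - 1 - s from by omega] at h
    exact h
  -- ### The final contradiction
  have h1 := had (Q - 1) (by omega)
  have h2 := haf (Q - 1) (by omega)
  rw [show p₁ + L - 1 - (Q - 1) = p₁ + L - Q from by omega,
      show p₄ + L - 1 - (Q - 1) = p₄ + L - Q from by omega] at h1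
  rw [show p₁ + L - 1 - (Q - 1) = p₁ + L - Q from by omega,
      show p₅ + L - 1 - (Q - 1) = p₅ + L - Q from by omega] at h2
  exact hne (h1.symm.trans h2)
end

section
/- In the Ehrenfeucht–Mycielski sequence, if B is a good word (its first two occurrences are preceded by complementary bits), then the first four occurrences of B cannot take the form B a₁ (1−a₂), B(1−a₁), B a₁ a₂, B a₁ a₂ for any bits a₁, a₂. -/
/-- Lemma 4.2: for a good word `B`, the first four occurrences of `B` in the
EM sequence cannot take the form `Ba₁(1-a₂), B(1-a₁), Ba₁a₂, Ba₁a₂`. -/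
theorem em_lemma_4_2
    (x : ℕ → Bool) (hx : IsEM x) (B : List Bool) (hB : B ≠ [])
    (hgood : GoodWord x B)
    (a₁ a₂ : Bool) (p₁ p₂ p₃ p₄ : ℕ)
    (h4 : FirstFourOccs x B p₁ p₂ p₃ p₄) :
    ¬ (x (p₁ + B.length) = a₁ ∧ x (p₁ + B.length + 1) = !a₂ ∧
       x (p₂ + B.length) = !a₁ ∧
       x (p₃ + B.length) = a₁ ∧ x (p₃ + B.length + 1) = a₂ ∧
       x (p₄ + B.length) = a₁ ∧ x (p₄ + B.length + 1) = a₂) := by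

  rintro ⟨hA1, hA2, hB1, hC1, hC2, hD1, hD2⟩
  obtain ⟨h12, h23, h34, o1, o2, o3, o4, hmin⟩ := h4
  have hL : 0 < B.length := List.length_pos_iff.mpr hB
  obtain ⟨-, -, -, hstep⟩ := hx
  have hocc34 : ∀ k < B.length, x (p₃ + k) = x (p₄ + k) := fun k hk =>
    (o3 ⟨k, hk⟩).trans (o4 ⟨k, hk⟩).symm
  -- Step A : x (p₂ - 1) = x (p₄ - 1)
  have resA : x (p₂ - 1) = x (p₄ - 1) := by
    obtain ⟨l, j, ⟨hl0, hln, hjl, hmatch⟩, hlmax, hjmax, hbit⟩ :=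
      hstep (p₄ + B.length) (by omega)
    have hmP3 : MatchAt x (p₄ + B.length) B.length p₃ := by
      refine ⟨hL, by omega, by omega, fun k hk => ?_⟩
      have e : p₄ + B.length - B.length + k = p₄ + k := by omega
      rw [e]; exact hocc34 k hk
    have hlL : B.length ≤ l := hlmax _ _ hmP3
    have hoccp : OccursAt x B (j + (l - B.length)) := by
      intro k
      have hk := k.isLt
      have h1 := hmatch (l - B.length + ↑k) (by omega)
      have e1 : j + (l - B.length + ↑k) = j + (l - B.length) + ↑k := by omega
      have e2 : p₄ + B.length - l + (l - B.length + ↑k) = p₄ + ↑k := by omega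
      rw [e1, e2] at h1
      exact h1.trans (o4 k)
    have hbj : x (j + l) = !a₁ := by
      rw [← hD1, hbit, Bool.not_not]
    have hp2 : j + (l - B.length) = p₂ := by
      rcases hmin _ (by omega) hoccp with h | h | h
      · exfalso
        have e : j + l = p₁ + B.length := by omega
        rw [e, hA1] at hbj
        exact absurd hbj (by cases a₁ <;> simp)
      · exact h
      · exfalso
        have e : j + l = p₃ + B.length := by omega
        rw [e, hC1] at hbj
        exact absurd hbj (by cases a₁ <;> simp)
    have hlgt : B.length + 1 ≤ l := by
      by_contra hc
      have hl : l = B.length := by omega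
      have hj3 : p₃ ≤ j := hjmax p₃ (by rw [hl]; exact hmP3)
      omega
    have h1 := hmatch (l - B.length - 1) (by omega)
    have e1 : j + (l - B.length - 1) = p₂ - 1 := by omega
    have e2 : p₄ + B.length - l + (l - B.length - 1) = p₄ - 1 := by omega
    rw [e1, e2] at h1
    exact h1
  -- Step B : 1 ≤ p₁ and x (p₁ - 1) = x (p₄ - 1)
  obtain ⟨hp1pos, resB⟩ : 1 ≤ p₁ ∧ x (p₁ - 1) = x (p₄ - 1) := by
    obtain ⟨l, j, ⟨hl0, hln, hjl, hmatch⟩, hlmax, hjmax, hbit⟩ :=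
      hstep (p₄ + B.length + 1) (by omega)
    have hmP3 : MatchAt x (p₄ + B.length + 1) (B.length + 1) p₃ := by
      refine ⟨by omega, by omega, by omega, fun k hk => ?_⟩
      have e : p₄ + B.length + 1 - (B.length + 1) + k = p₄ + k := by omega
      rw [e]
      rcases Nat.lt_or_ge k B.length with h | h
      · exact hocc34 k h
      · have hkL : k = B.length := by omega
        rw [hkL]; exact hC1.trans hD1.symm
    have hlL : B.length + 1 ≤ l := hlmax _ _ hmP3
    have hoccp : OccursAt x B (j + (l - B.length - 1)) := by
      intro k
      have hk := k.isLt
      have h1 := hmatch (l - B.length - 1 + ↑k) (by omega)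
      have e1 : j + (l - B.length - 1 + ↑k) = j + (l - B.length - 1) + ↑k := by omega
      have e2 : p₄ + B.length + 1 - l + (l - B.length - 1 + ↑k) = p₄ + ↑k := by omega
      rw [e1, e2] at h1
      exact h1.trans (o4 k)
    have hpL : x (j + (l - B.length - 1) + B.length) = a₁ := by
      have h1 := hmatch (l - 1) (by omega)
      have e1 : j + (l - 1) = j + (l - B.length - 1) + B.length := by omega
      have e2 : p₄ + B.length + 1 - l + (l - 1) = p₄ + B.length := by omega
      rw [e1, e2] at h1
      exact h1.trans hD1
    have hbj : x (j + l) = !a₂ := by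
      rw [← hD2, hbit, Bool.not_not]
    have hp1 : j + (l - B.length - 1) = p₁ := by
      rcases hmin _ (by omega) hoccp with h | h | h
      · exact h
      · exfalso
        rw [h, hB1] at hpL
        exact absurd hpL (by cases a₁ <;> simp)
      · exfalso
        have e : j + l = p₃ + B.length + 1 := by omega
        rw [e, hC2] at hbj
        exact absurd hbj (by cases a₂ <;> simp)
    have hlgt : B.length + 2 ≤ l := by
      by_contra hc
      have hl : l = B.length + 1 := by omega
      have hj3 : p₃ ≤ j := hjmax p₃ (by rw [hl]; exact hmP3)
      omega
    refine ⟨by omega, ?_⟩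
    have h1 := hmatch (l - B.length - 2) (by omega)
    have e1 : j + (l - B.length - 2) = p₁ - 1 := by omega
    have e2 : p₄ + B.length + 1 - l + (l - B.length - 2) = p₄ - 1 := by omega
    rw [e1, e2] at h1
    exact h1
  -- Step C : goodness gives the contradiction
  obtain ⟨i, jj, hij, oi, oj, hfirst, hcomp⟩ := hgood
  have hi : i = p₁ := by
    rcases Nat.lt_or_ge p₁ jj with h | h
    · exact (hfirst p₁ h o1).symm
    · exfalso
      rcases hmin i (by omega) oi with h' | h' | h' <;> omega
  have hj : jj = p₂ := by
    rcases Nat.lt_trichotomy jj p₂ with h | h | h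
    · exfalso; rcases hmin jj (by omega) oj with h' | h' | h' <;> omega
    · exact h
    · exfalso; have := hfirst p₂ h o2; omega
  rcases hcomp with h0 | hcmp
  · omega
  · rw [hi, hj] at hcmp
    rw [resB, resA] at hcmp
    cases hx4 : x (p₄ - 1) <;> rw [hx4] at hcmp <;> simp at hcmp
end

section
/- In the Ehrenfeucht–Mycielski sequence, for any nonempty binary word B and bits a₁, a₂, the first five occurrences of B cannot take the form B a₁ a₂, B(1−a₁), B a₁ (1−a₂), B a₁ a₂, B a₁ a₂. -/
lemma bool_ne_not (b : Bool) : b ≠ !b := by cases b <;> simp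

lemma occ_between {x : ℕ → Bool} {B : List Bool} {p q : ℕ}
    (hp : OccursAt x B p) (hq : OccursAt x B q) {i : ℕ} (hi : i < B.length) :
    x (p + i) = x (q + i) := by
  have h1 := hp ⟨i, hi⟩
  have h2 := hq ⟨i, hi⟩
  exact h1.trans h2.symm

/-- If a suffix match of length `l ≥ |B| + d` exists at step `n = p + |B| + d`
where `B` occurs at `p`, then the matched copy contains an occurrence of `B`,
together with copies of the `d` following bits. -/
lemma match_occ {x : ℕ → Bool} {B : List Bool} {p n l j d : ℕ}
    (hp : OccursAt x B p) (h : MatchAt x n l j)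
    (hn : p + B.length + d = n) (hl : B.length + d ≤ l) :
    OccursAt x B (j + l - B.length - d) ∧
    (j + l - B.length - d) + B.length + d = j + l ∧
    ∀ s < d, x (j + l - d + s) = x (p + B.length + s) := by
  obtain ⟨hl0, hln, hjn, hmatch⟩ := h
  refine ⟨?_, by omega, ?_⟩
  · intro k
    have hk : (k : ℕ) < B.length := k.2
    have h1 := hmatch (l - B.length - d + (k : ℕ)) (by omega)
    have h2 : x (j + l - B.length - d + (k : ℕ)) = x (p + (k : ℕ)) := by
      convert h1 using 2 <;> omega
    exact h2.trans (hp k)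
  · intro s hs
    have h1 := hmatch (l - d + s) (by omega)
    have h2 : x (j + l - d + s) = x (p + B.length + s) := by
      convert h1 using 2 <;> omega
    exact h2

/-- Lemma 4.3: the first five occurrences of a nonempty word `B` in the EM
sequence cannot take the form `Ba₁a₂, B(1-a₁), Ba₁(1-a₂), Ba₁a₂, Ba₁a₂`. -/
theorem em_lemma_4_3
    (x : ℕ → Bool) (hx : IsEM x) (B : List Bool) (hB : B ≠ [])
    (a₁ a₂ : Bool) (p₁ p₂ p₃ p₄ p₅ : ℕ)
    (h5 : FirstFiveOccs x B p₁ p₂ p₃ p₄ p₅) :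
    ¬ (x (p₁ + B.length) = a₁ ∧ x (p₁ + B.length + 1) = a₂ ∧
       x (p₂ + B.length) = !a₁ ∧
       x (p₃ + B.length) = a₁ ∧ x (p₃ + B.length + 1) = !a₂ ∧
       x (p₄ + B.length) = a₁ ∧ x (p₄ + B.length + 1) = a₂ ∧
       x (p₅ + B.length) = a₁ ∧ x (p₅ + B.length + 1) = a₂) := by
  rintro ⟨h1a, h1b, h2b, h3a, h3b, h4a, h4b, h5a, h5b⟩
  obtain ⟨hp12, hp23, hp34, hp45, ho1, ho2, ho3, ho4, ho5, hfirst⟩ := h5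
  have hL : 0 < B.length := List.length_pos_iff.mpr hB
  have hstep := hx.2.2.2
  -- Step at n = p₄ + |B| + 1 : suffix ends with B a₁, appended bit is a₂.
  obtain ⟨l₂, j₂, hm₂, hlmax₂, hjmax₂, hrule₂⟩ := hstep (p₄ + B.length + 1) (by omega)
  have hb₂ := hm₂.2.1
  have hl₂ : B.length + 1 ≤ l₂ := by
    apply hlmax₂ (B.length + 1) p₁
    refine ⟨by omega, by omega, by omega, ?_⟩
    intro k hk
    rcases lt_or_ge k B.length with h | h
    · have hbb := occ_between ho1 ho4 h
      convert hbb using 2 <;> omega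
    · have hkL : k = B.length := by omega
      subst hkL
      have hbb : x (p₁ + B.length) = x (p₄ + B.length) := by rw [h1a, h4a]
      convert hbb using 2 <;> omega
  obtain ⟨hoq₂, he₂, hs₂⟩ := match_occ (d := 1) ho4 hm₂ (by omega) hl₂
  have hq₂lt := hm₂.2.2.1
  have hq₂La : x (j₂ + l₂ - 1) = a₁ := by
    have h := hs₂ 0 (by omega)
    simp only [Nat.add_zero] at h
    exact h.trans h4a
  have hq₂Lb : x (j₂ + l₂) = !a₂ := by
    rw [← h4b, hrule₂, Bool.not_not]
  have hj₂ : j₂ + l₂ = p₃ + B.length + 1 := by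
    rcases hfirst (j₂ + l₂ - B.length - 1) (by omega) hoq₂ with h | h | h | h
    · exfalso
      have hb : x (p₁ + B.length + 1) = !a₂ := by
        rw [← h, he₂]; exact hq₂Lb
      exact bool_ne_not a₂ (h1b.symm.trans hb)
    · exfalso
      have hb : x (p₂ + B.length) = a₁ := by
        rw [← h, show j₂ + l₂ - B.length - 1 + B.length = j₂ + l₂ - 1 from by omega]
        exact hq₂La
      exact bool_ne_not a₁ (hb.symm.trans h2b)
    · omega
    · omega
  -- Step at n = p₅ + |B| + 1 : suffix ends with B a₁, appended bit is a₂.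
  obtain ⟨l₁, j₁, hm₁, hlmax₁, hjmax₁, hrule₁⟩ := hstep (p₅ + B.length + 1) (by omega)
  have hb₁ := hm₁.2.1
  have hl₁ : B.length + 1 ≤ l₁ := by
    apply hlmax₁ (B.length + 1) p₄
    refine ⟨by omega, by omega, by omega, ?_⟩
    intro k hk
    rcases lt_or_ge k B.length with h | h
    · have hbb := occ_between ho4 ho5 h
      convert hbb using 2 <;> omega
    · have hkL : k = B.length := by omega
      subst hkL
      have hbb : x (p₄ + B.length) = x (p₅ + B.length) := by rw [h4a, h5a]
      convert hbb using 2 <;> omega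
  obtain ⟨hoq₁, he₁, hs₁⟩ := match_occ (d := 1) ho5 hm₁ (by omega) hl₁
  have hq₁lt := hm₁.2.2.1
  have hq₁La : x (j₁ + l₁ - 1) = a₁ := by
    have h := hs₁ 0 (by omega)
    simp only [Nat.add_zero] at h
    exact h.trans h5a
  have hq₁Lb : x (j₁ + l₁) = !a₂ := by
    rw [← h5b, hrule₁, Bool.not_not]
  have hj₁ : j₁ + l₁ = p₃ + B.length + 1 := by
    rcases hfirst (j₁ + l₁ - B.length - 1) (by omega) hoq₁ with h | h | h | h
    · exfalso
      have hb : x (p₁ + B.length + 1) = !a₂ := by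
        rw [← h, he₁]; exact hq₁Lb
      exact bool_ne_not a₂ (h1b.symm.trans hb)
    · exfalso
      have hb : x (p₂ + B.length) = a₁ := by
        rw [← h, show j₁ + l₁ - B.length - 1 + B.length = j₁ + l₁ - 1 from by omega]
        exact hq₁La
      exact bool_ne_not a₁ (hb.symm.trans h2b)
    · omega
    · exfalso
      have hb : x (p₄ + B.length + 1) = !a₂ := by
        rw [← h, he₁]; exact hq₁Lb
      exact bool_ne_not a₂ (h4b.symm.trans hb)
  -- Step at n = p₄ + |B| : suffix ends with B, appended bit is a₁.
  obtain ⟨m₄, j₄, hm₄, hlmax₄, hjmax₄, hrule₄⟩ := hstep (p₄ + B.length) (by omega)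
  have hb₄ := hm₄.2.1
  have hml₄ : B.length ≤ m₄ := by
    apply hlmax₄ B.length p₃
    refine ⟨hL, by omega, by omega, ?_⟩
    intro k hk
    have hbb := occ_between ho3 ho4 hk
    convert hbb using 2 <;> omega
  obtain ⟨hoq₄, he₄, _⟩ := match_occ (d := 0) ho4 hm₄ (by omega) (by omega)
  have hq₄lt := hm₄.2.2.1
  have hq₄La : x (j₄ + m₄) = !a₁ := by
    rw [← h4a, hrule₄, Bool.not_not]
  have hj₄ : j₄ + m₄ = p₂ + B.length := by
    rcases hfirst (j₄ + m₄ - B.length - 0) (by omega) hoq₄ with h | h | h | h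
    · exfalso
      have hb : x (p₁ + B.length) = !a₁ := by
        rw [← h, show j₄ + m₄ - B.length - 0 + B.length = j₄ + m₄ from by omega]
        exact hq₄La
      exact bool_ne_not a₁ (h1a.symm.trans hb)
    · omega
    · exfalso
      have hb : x (p₃ + B.length) = !a₁ := by
        rw [← h, show j₄ + m₄ - B.length - 0 + B.length = j₄ + m₄ from by omega]
        exact hq₄La
      exact bool_ne_not a₁ (h3a.symm.trans hb)
    · omega
  -- Step at n = p₅ + |B| : suffix ends with B, appended bit is a₁.
  obtain ⟨m₅, j₅, hm₅, hlmax₅, hjmax₅, hrule₅⟩ := hstep (p₅ + B.length) (by omega)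
  have hb₅ := hm₅.2.1
  have hml₅ : B.length ≤ m₅ := by
    apply hlmax₅ B.length p₄
    refine ⟨hL, by omega, by omega, ?_⟩
    intro k hk
    have hbb := occ_between ho4 ho5 hk
    convert hbb using 2 <;> omega
  obtain ⟨hoq₅, he₅, _⟩ := match_occ (d := 0) ho5 hm₅ (by omega) (by omega)
  have hq₅lt := hm₅.2.2.1
  have hq₅La : x (j₅ + m₅) = !a₁ := by
    rw [← h5a, hrule₅, Bool.not_not]
  have hj₅ : j₅ + m₅ = p₂ + B.length := by
    rcases hfirst (j₅ + m₅ - B.length - 0) (by omega) hoq₅ with h | h | h | h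
    · exfalso
      have hb : x (p₁ + B.length) = !a₁ := by
        rw [← h, show j₅ + m₅ - B.length - 0 + B.length = j₅ + m₅ from by omega]
        exact hq₅La
      exact bool_ne_not a₁ (h1a.symm.trans hb)
    · omega
    · exfalso
      have hb : x (p₃ + B.length) = !a₁ := by
        rw [← h, show j₅ + m₅ - B.length - 0 + B.length = j₅ + m₅ from by omega]
        exact hq₅La
      exact bool_ne_not a₁ (h3a.symm.trans hb)
    · exfalso
      have hb : x (p₄ + B.length) = !a₁ := by
        rw [← h, show j₅ + m₅ - B.length - 0 + B.length = j₅ + m₅ from by omega]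
        exact hq₅La
      exact bool_ne_not a₁ (h4a.symm.trans hb)
  -- Key fact 1 : l₂ < l₁  (otherwise the last occurrence of the longest suffix
  -- at step p₅+|B|+1 would end at p₄+|B| rather than at p₃+|B|).
  have hkey1 : l₂ < l₁ := by
    by_contra hcon
    push_neg at hcon
    have hmm : MatchAt x (p₅ + B.length + 1) l₁ (p₄ + B.length + 1 - l₁) := by
      refine ⟨hm₁.1, hm₁.2.1, by omega, ?_⟩
      intro k hk
      have h1 := hm₂.2.2.2 (l₂ - l₁ + k) (by omega)
      have h2 := hm₁.2.2.2 k hk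
      have h3 : x (j₁ + k) = x (p₄ + B.length + 1 - l₁ + k) := by
        convert h1 using 2 <;> omega
      exact h3.symm.trans h2
    have := hjmax₁ _ hmm
    omega
  -- Key fact 2 : l₂ ≤ m₄.
  have hkey2 : l₂ ≤ m₄ := by
    by_contra hcon
    push_neg at hcon
    have hmm : MatchAt x (p₄ + B.length) m₄ (p₃ + B.length - m₄) := by
      refine ⟨hm₄.1, hm₄.2.1, by omega, ?_⟩
      intro k hk
      have h1 := hm₂.2.2.2 (l₂ - 1 - m₄ + k) (by omega)
      convert h1 using 2 <;> omega
    have := hjmax₄ _ hmm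
    omega
  -- Key fact 3 : m₄ < m₅.
  have hkey3 : m₄ < m₅ := by
    by_contra hcon
    push_neg at hcon
    have hmm : MatchAt x (p₅ + B.length) m₅ (p₄ + B.length - m₅) := by
      refine ⟨hm₅.1, hm₅.2.1, by omega, ?_⟩
      intro k hk
      have h1 := hm₄.2.2.2 (m₄ - m₅ + k) (by omega)
      have h2 := hm₅.2.2.2 k hk
      have h3 : x (j₅ + k) = x (p₄ + B.length - m₅ + k) := by
        convert h1 using 2 <;> omega
      exact h3.symm.trans h2
    have := hjmax₅ _ hmm
    omega
  have hl₂p₂ : l₂ ≤ p₂ + B.length := by omega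
  -- Key fact 4 : the bits preceding the common suffix of length l₂ ending at
  -- p₃+|B| and p₄+|B| differ (maximality of l₂ at step p₄+|B|+1).
  have hkey4 : x (p₃ + B.length - l₂) ≠ x (p₄ + B.length - l₂) := by
    intro hEq
    have hmm : MatchAt x (p₄ + B.length + 1) (l₂ + 1) (p₃ + B.length - l₂) := by
      refine ⟨by omega, by omega, by omega, ?_⟩
      intro k hk
      cases k with
      | zero => convert hEq using 2 <;> omega
      | succ k =>
        have h1 := hm₂.2.2.2 k (by omega)
        convert h1 using 2 <;> omega
    have := hlmax₂ _ _ hmm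
    omega
  -- Final contradiction.
  have e53 : x (p₃ + B.length - l₂) = x (p₅ + B.length - l₂) := by
    have h1 := hm₁.2.2.2 (l₁ - 1 - l₂) (by omega)
    convert h1 using 2 <;> omega
  have e52 : x (p₂ + B.length - l₂) = x (p₅ + B.length - l₂) := by
    have h1 := hm₅.2.2.2 (m₅ - l₂) (by omega)
    convert h1 using 2 <;> omega
  have e42 : x (p₂ + B.length - l₂) = x (p₄ + B.length - l₂) := by
    have h1 := hm₄.2.2.2 (m₄ - l₂) (by omega)
    convert h1 using 2 <;> omega
  exact hkey4 (e53.trans (e52.symm.trans e42))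
end

section
/- In the Ehrenfeucht–Mycielski sequence, for any nonempty binary word B and bits a₁, a₂, the first four occurrences of B cannot take the form B(1−a₁), B a₁ (1−a₂), B a₁ a₂, B a₁ a₂. -/
/-- Length of the longest common backward extension of `x` before positions
`u` and `v` (bounded by `min u v`). -/
def extLen (x : ℕ → Bool) (u v : ℕ) : ℕ :=
  Nat.findGreatest (fun t => t ≤ u ∧ t ≤ v ∧ ∀ s < t, x (u - 1 - s) = x (v - 1 - s)) u

lemma extLen_spec (x : ℕ → Bool) (u v : ℕ) :
    extLen x u v ≤ u ∧ extLen x u v ≤ v ∧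
      ∀ s < extLen x u v, x (u - 1 - s) = x (v - 1 - s) :=
  Nat.findGreatest_spec
    (P := fun t => t ≤ u ∧ t ≤ v ∧ ∀ s < t, x (u - 1 - s) = x (v - 1 - s))
    (Nat.zero_le u)
    ⟨Nat.zero_le u, Nat.zero_le v, fun s hs => absurd hs (Nat.not_lt_zero s)⟩

lemma le_extLen (x : ℕ → Bool) {u v t : ℕ} (h1 : t ≤ u) (h2 : t ≤ v)
    (h3 : ∀ s < t, x (u - 1 - s) = x (v - 1 - s)) : t ≤ extLen x u v :=
  Nat.le_findGreatest h1 ⟨h1, h2, h3⟩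

lemma extLen_symm (x : ℕ → Bool) (u v : ℕ) : extLen x u v = extLen x v u := by
  obtain ⟨h1, h2, h3⟩ := extLen_spec x u v
  obtain ⟨g1, g2, g3⟩ := extLen_spec x v u
  exact le_antisymm (le_extLen x h2 h1 (fun s hs => (h3 s hs).symm))
    (le_extLen x g2 g1 (fun s hs => (g3 s hs).symm))

lemma extLen_eq_of_lt (x : ℕ → Bool) {a b c : ℕ}
    (h : extLen x a b < extLen x a c) : extLen x b c = extLen x a b := by
  obtain ⟨hab_a, hab_b, hab⟩ := extLen_spec x a b
  obtain ⟨hac_a, hac_c, hac⟩ := extLen_spec x a c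
  obtain ⟨hbc_b, hbc_c, hbc⟩ := extLen_spec x b c
  refine le_antisymm ?_ ?_
  · by_contra hlt
    push_neg at hlt
    have h1 : x (b - 1 - extLen x a b) = x (c - 1 - extLen x a b) := hbc _ hlt
    have h2 : x (a - 1 - extLen x a b) = x (c - 1 - extLen x a b) := hac _ h
    have : extLen x a b + 1 ≤ extLen x a b := by
      apply le_extLen x (by omega) (by omega)
      intro s hs
      rcases Nat.lt_succ_iff_lt_or_eq.mp hs with hs | hs
      · exact hab s hs
      · subst hs; exact h2.trans h1.symm
    omega
  · apply le_extLen x hab_b (by omega)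
    intro s hs
    exact (hab s hs).symm.trans (hac s (by omega))

/-- If the backward extension from two occurrences of `B` (each followed by
`r` identical bits) is long enough, we get a match at the suffix of length
`t` at step `p + B.length + r`. -/
lemma matchAt_of_ext (x : ℕ → Bool) (B : List Bool) {q p r t : ℕ}
    (hq : OccursAt x B q) (hp : OccursAt x B p) (hqp : q < p)
    (hr : ∀ i < r, x (q + B.length + i) = x (p + B.length + i))
    (ht0 : 0 < t) (ht : t ≤ B.length + r + extLen x q p) :
    MatchAt x (p + B.length + r) t (q + B.length + r - t) := by
  obtain ⟨hu, hv, hagree⟩ := extLen_spec x q p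
  have htq : t ≤ q + B.length + r := by omega
  refine ⟨ht0, by omega, by omega, ?_⟩
  intro k hk
  by_cases h1 : t - k ≤ r
  · have hi : r - (t - k) < r := by omega
    have h := hr (r - (t - k)) hi
    have e1 : q + B.length + r - t + k = q + B.length + (r - (t - k)) := by omega
    have e2 : p + B.length + r - t + k = p + B.length + (r - (t - k)) := by omega
    rw [e1, e2]
    exact h
  · by_cases h2 : t - k ≤ r + B.length
    · have hm : B.length + r - (t - k) < B.length := by omega
      have hqq : x (q + (B.length + r - (t - k))) = B.get ⟨B.length + r - (t - k), hm⟩ :=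
        hq ⟨B.length + r - (t - k), hm⟩
      have hpp : x (p + (B.length + r - (t - k))) = B.get ⟨B.length + r - (t - k), hm⟩ :=
        hp ⟨B.length + r - (t - k), hm⟩
      have e1 : q + B.length + r - t + k = q + (B.length + r - (t - k)) := by omega
      have e2 : p + B.length + r - t + k = p + (B.length + r - (t - k)) := by omega
      rw [e1, e2, hqq, hpp]
    · have hs : t - k - r - B.length - 1 < extLen x q p := by omega
      have h := hagree _ hs
      have e1 : q + B.length + r - t + k = q - 1 - (t - k - r - B.length - 1) := by omega
      have e2 : p + B.length + r - t + k = p - 1 - (t - k - r - B.length - 1) := by omega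
      rw [e1, e2]
      exact h

/-- Decomposition of a long match at step `p + B.length + r`: it ends with a
copy of `B` (plus `r` following bits) at an earlier position `q`, and gives a
backward extension between `q` and `p`. -/
lemma chosen_decomp (x : ℕ → Bool) (B : List Bool) {p r t j : ℕ}
    (hp : OccursAt x B p)
    (hm : MatchAt x (p + B.length + r) t j)
    (htL : B.length + r ≤ t) :
    ∃ q, q < p ∧ OccursAt x B q ∧ q + B.length + r = j + t ∧
      (∀ i < r, x (q + B.length + i) = x (p + B.length + i)) ∧
      t ≤ B.length + r + extLen x q p := by
  obtain ⟨ht0, htn, hjt, hbits⟩ := hm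
  refine ⟨j + t - (B.length + r), by omega, ?_, by omega, ?_, ?_⟩
  · intro k
    have hk : (k : ℕ) < B.length := k.isLt
    have h1 := hbits (t - (B.length + r) + (k : ℕ)) (by omega)
    have e1 : j + (t - (B.length + r) + (k : ℕ)) = j + t - (B.length + r) + (k : ℕ) := by omega
    have e2 : p + B.length + r - t + (t - (B.length + r) + (k : ℕ)) = p + (k : ℕ) := by omega
    rw [e1, e2] at h1
    rw [h1]
    exact hp k
  · intro i hi
    have h1 := hbits (t - r + i) (by omega)
    have e1 : j + (t - r + i) = j + t - (B.length + r) + B.length + i := by omega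
    have e2 : p + B.length + r - t + (t - r + i) = p + B.length + i := by omega
    rw [e1, e2] at h1
    exact h1
  · have key : t - (B.length + r) ≤ extLen x (j + t - (B.length + r)) p := by
      apply le_extLen x (by omega) (by omega)
      intro s hs
      have h1 := hbits (t - (B.length + r) - 1 - s) (by omega)
      have e1 : j + (t - (B.length + r) - 1 - s) = j + t - (B.length + r) - 1 - s := by omega
      have e2 : p + B.length + r - t + (t - (B.length + r) - 1 - s) = p - 1 - s := by omega
      rw [e1, e2] at h1
      exact h1
    omega

/-- Analysis of the generation step `p + B.length + r`: the chosen match ends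
with a copy of `B` (plus `r` matching bits) at some earlier `q`, the generated
bit is the complement of the bit after that copy, and any later candidate
copy has strictly shorter backward extension. -/
lemma em_step (x : ℕ → Bool) (hx : IsEM x) (B : List Bool) {p r q₀ : ℕ}
    (hp : OccursAt x B p) (hq₀ : OccursAt x B q₀) (hq₀p : q₀ < p)
    (hr₀ : ∀ i < r, x (q₀ + B.length + i) = x (p + B.length + i))
    (hL : 0 < B.length) (hn : 3 ≤ p + B.length + r) :
    ∃ q, q < p ∧ OccursAt x B q ∧
      (∀ i < r, x (q + B.length + i) = x (p + B.length + i)) ∧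
      x (p + B.length + r) = !x (q + B.length + r) ∧
      ∀ q', OccursAt x B q' → q < q' → q' < p →
        (∀ i < r, x (q' + B.length + i) = x (p + B.length + i)) →
        extLen x q' p < extLen x q p := by
  obtain ⟨-, -, -, hrule⟩ := hx
  obtain ⟨l, j, hm, hmaxl, hmaxj, hbit⟩ := hrule _ hn
  have hl0 : B.length + r ≤ l :=
    hmaxl _ _ (matchAt_of_ext x B (t := B.length + r) hq₀ hp hq₀p hr₀ (by omega) (by omega))
  obtain ⟨q, hqp, hq, hsum, hbits, hext⟩ := chosen_decomp x B hp hm hl0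
  refine ⟨q, hqp, hq, hbits, ?_, ?_⟩
  · rw [hbit, show j + l = q + B.length + r from hsum.symm]
  · intro q' hq' hqq' hq'p hr'
    by_contra hcon
    push_neg at hcon
    have hmatch := matchAt_of_ext x B (t := l) hq' hp hq'p hr' (by omega) (by omega)
    have := hmaxj _ hmatch
    omega

/-- Lemma 4.4: the first four occurrences of a nonempty word `B` in the EM
sequence cannot take the form `B(1-a₁), Ba₁(1-a₂), Ba₁a₂, Ba₁a₂`. -/
theorem em_lemma_4_4
    (x : ℕ → Bool) (hx : IsEM x) (B : List Bool) (hB : B ≠ [])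
    (a₁ a₂ : Bool) (p₁ p₂ p₃ p₄ : ℕ)
    (h4 : FirstFourOccs x B p₁ p₂ p₃ p₄) :
    ¬ (x (p₁ + B.length) = !a₁ ∧
       x (p₂ + B.length) = a₁ ∧ x (p₂ + B.length + 1) = !a₂ ∧
       x (p₃ + B.length) = a₁ ∧ x (p₃ + B.length + 1) = a₂ ∧
       x (p₄ + B.length) = a₁ ∧ x (p₄ + B.length + 1) = a₂) := by
  rintro ⟨b1, b2, b2', b3, b3', b4, b4'⟩
  obtain ⟨h12, h23, h34, o1, o2, o3, o4, hfirst⟩ := h4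
  have hL : 0 < B.length := List.length_pos_iff.mpr hB
  have hr0 : ∀ (a : ℕ), ∀ i < 0, x (a + B.length + i) = x (a + B.length + i) :=
    fun a i hi => absurd hi (Nat.not_lt_zero i)
  -- Step at p₃ + B.length (r = 0): chosen copy is at p₁.
  obtain ⟨q, hq3, hqo, -, hqbit, hqcomp⟩ :=
    em_step x hx B o3 o1 (by omega) (fun i hi => absurd hi (Nat.not_lt_zero i)) hL (by omega)
  have hq1 : q = p₁ := by
    rcases hfirst q (by omega) hqo with h | h | h
    · exact h
    · subst h
      simp only [Nat.add_zero] at hqbit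
      rw [b3, b2] at hqbit
      simp at hqbit
    · omega
  obtain rfl : p₁ = q := hq1.symm
  have hA : extLen x p₂ p₃ < extLen x p₁ p₃ := by
    have := hqcomp p₂ o2 h12 h23 (fun i hi => absurd hi (Nat.not_lt_zero i))
    exact this
  -- Step at p₄ + B.length (r = 0): chosen copy is at p₁.
  obtain ⟨q, hq4, hqo4, -, hqbit4, hqcomp4⟩ :=
    em_step x hx B o4 o1 (by omega) (fun i hi => absurd hi (Nat.not_lt_zero i)) hL (by omega)
  have hq14 : q = p₁ := by
    rcases hfirst q (by omega) hqo4 with h | h | h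
    · exact h
    · subst h
      simp only [Nat.add_zero] at hqbit4
      rw [b4, b2] at hqbit4
      simp at hqbit4
    · subst h
      simp only [Nat.add_zero] at hqbit4
      rw [b4, b3] at hqbit4
      simp at hqbit4
  obtain rfl : p₁ = q := hq14.symm
  have hB2 : extLen x p₂ p₄ < extLen x p₁ p₄ :=
    hqcomp4 p₂ o2 h12 (by omega) (fun i hi => absurd hi (Nat.not_lt_zero i))
  have hB3 : extLen x p₃ p₄ < extLen x p₁ p₄ :=
    hqcomp4 p₃ o3 (by omega) h34 (fun i hi => absurd hi (Nat.not_lt_zero i))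
  -- Step at p₄ + B.length + 1 (r = 1): chosen copy is at p₂.
  have hr34 : ∀ i < 1, x (p₃ + B.length + i) = x (p₄ + B.length + i) := by
    intro i hi
    have : i = 0 := by omega
    subst this
    simp only [Nat.add_zero]
    rw [b3, b4]
  obtain ⟨q, hq5, hqo5, hqbits5, hqbit5, hqcomp5⟩ :=
    em_step x hx B o4 o3 h34 hr34 hL (by omega)
  have hq25 : q = p₂ := by
    rcases hfirst q (by omega) hqo5 with h | h | h
    · subst h
      have := hqbits5 0 (by omega)
      simp only [Nat.add_zero] at this
      rw [b1, b4] at this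
      simp at this
    · exact h
    · subst h
      rw [b4', b3'] at hqbit5
      simp at hqbit5
  obtain rfl : p₂ = q := hq25.symm
  have hC : extLen x p₃ p₄ < extLen x p₂ p₄ := hqcomp5 p₃ o3 h23 h34 hr34
  -- Ultrametric bookkeeping.
  have s12 := extLen_symm x p₁ p₂
  have s13 := extLen_symm x p₁ p₃
  have s23 := extLen_symm x p₂ p₃
  have s14 := extLen_symm x p₁ p₄
  have s24 := extLen_symm x p₂ p₄
  have s34 := extLen_symm x p₃ p₄
  have h1 : extLen x p₂ p₁ = extLen x p₄ p₂ :=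
    extLen_eq_of_lt x (a := p₄) (by omega)
  have h2 : extLen x p₃ p₁ = extLen x p₄ p₃ :=
    extLen_eq_of_lt x (a := p₄) (by omega)
  have h3pre : extLen x p₁ p₃ < extLen x p₁ p₂ := by omega
  have h3 : extLen x p₃ p₂ = extLen x p₁ p₃ := extLen_eq_of_lt x h3pre
  omega
end

section
/- Let B be a good word in the Ehrenfeucht–Mycielski sequence with at least five occurrences, ending at positions a < b < c < d < e. Let u = x_{a+1} x_{b+1} x_{c+1} x_{d+1} x_{e+1} and v = x_{a+2} x_{b+2} x_{c+2} x_{d+2} x_{e+2}. Then |N_u(0) − N_u(1)| ≤ 1 or |N_v(0) − N_v(1)| ≤ 1, where N_w(b) counts occurrences of bit b in the 5-bit word w. -/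
/-- The prefixes `x 0, …, x s` and `x 0, …, x t` have a common suffix of length `m`. -/
def CommonSuffix {α : Type*} (x : ℕ → α) (s t m : ℕ) : Prop :=
  m ≤ s + 1 ∧ m ≤ t + 1 ∧ ∀ k < m, x (s - k) = x (t - k)

open Classical in
noncomputable def commonSuffixLen {α : Type*} (x : ℕ → α) (s t : ℕ) : ℕ :=
  Nat.findGreatest (CommonSuffix x s t) (s + 1)

section CommonSuffixLen

variable {α : Type*} {x : ℕ → α} {s t r m : ℕ}

theorem CommonSuffix.mono {n : ℕ} (h : CommonSuffix x s t m) (hnm : n ≤ m) :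
    CommonSuffix x s t n :=
  ⟨hnm.trans h.1, hnm.trans h.2.1, fun k hk => h.2.2 k (hk.trans_le hnm)⟩

theorem CommonSuffix.symm (h : CommonSuffix x s t m) : CommonSuffix x t s m :=
  ⟨h.2.1, h.1, fun k hk => (h.2.2 k hk).symm⟩

theorem CommonSuffix.trans (h₁ : CommonSuffix x r s m) (h₂ : CommonSuffix x s t m) :
    CommonSuffix x r t m :=
  ⟨h₁.1, h₂.2.1, fun k hk => (h₁.2.2 k hk).trans (h₂.2.2 k hk)⟩

theorem le_commonSuffixLen_iff : m ≤ commonSuffixLen x s t ↔ CommonSuffix x s t m := by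
  classical
  refine ⟨fun h => ?_, fun h => Nat.le_findGreatest h.1 h⟩
  have hzero : CommonSuffix x s t 0 :=
    ⟨Nat.zero_le _, Nat.zero_le _, fun _ h => absurd h (Nat.not_lt_zero _)⟩
  exact (Nat.findGreatest_spec (Nat.zero_le _) hzero).mono h

theorem commonSuffixLen_le_succ_right : commonSuffixLen x s t ≤ t + 1 :=
  (le_commonSuffixLen_iff.1 le_rfl).2.1

theorem commonSuffixLen_comm : commonSuffixLen x s t = commonSuffixLen x t s :=
  le_antisymm (le_commonSuffixLen_iff.2 (le_commonSuffixLen_iff.1 le_rfl).symm)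
    (le_commonSuffixLen_iff.2 (le_commonSuffixLen_iff.1 le_rfl).symm)

theorem min_commonSuffixLen_le :
    min (commonSuffixLen x r s) (commonSuffixLen x s t) ≤ commonSuffixLen x r t :=
  le_commonSuffixLen_iff.2 <| ((le_commonSuffixLen_iff.1 (min_le_left _ _)).trans
    (le_commonSuffixLen_iff.1 (min_le_right _ _)))

theorem commonSuffixLen_eq_of_lt (h : commonSuffixLen x r s < commonSuffixLen x r t) :
    commonSuffixLen x s t = commonSuffixLen x r s := by
  have h₁ := min_commonSuffixLen_le (x := x) (r := s) (s := r) (t := t)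
  have h₂ := min_commonSuffixLen_le (x := x) (r := r) (s := t) (t := s)
  rw [commonSuffixLen_comm (s := s) (t := r)] at h₁
  rw [commonSuffixLen_comm (s := t) (t := s)] at h₂
  omega

theorem commonSuffixLen_le_of_lt {o : ℕ} (h : commonSuffixLen x o r ≤ commonSuffixLen x s t)
    (hlt : commonSuffixLen x s t < commonSuffixLen x s o) :
    commonSuffixLen x s r ≤ commonSuffixLen x s t := by
  have hos : commonSuffixLen x o s = commonSuffixLen x s o := commonSuffixLen_comm
  have hrs : commonSuffixLen x r s = commonSuffixLen x s r := commonSuffixLen_comm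
  have := commonSuffixLen_eq_of_lt (x := x) (r := o) (s := r) (t := s) (by omega)
  omega

theorem commonSuffixLen_lt_of_lt_of_lt {o c d e : ℕ}
    (hdc : commonSuffixLen x d c < commonSuffixLen x d o)
    (hec : commonSuffixLen x e c < commonSuffixLen x e o)
    (hed : commonSuffixLen x e d < commonSuffixLen x e o) :
    commonSuffixLen x e c < commonSuffixLen x e d := by
  have h₁ := commonSuffixLen_eq_of_lt hdc
  have h₂ := commonSuffixLen_eq_of_lt hec
  have h₃ := commonSuffixLen_eq_of_lt hed
  omega

theorem commonSuffixLen_succ_succ (h : x (s + 1) = x (t + 1)) :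
    commonSuffixLen x (s + 1) (t + 1) = commonSuffixLen x s t + 1 := by
  have step : ∀ m, CommonSuffix x (s + 1) (t + 1) (m + 1) ↔ CommonSuffix x s t m := by
    intro m
    refine ⟨fun ⟨hs, ht, h'⟩ => ⟨by omega, by omega, fun k hk => ?_⟩,
      fun ⟨hs, ht, h'⟩ => ⟨by omega, by omega, fun k hk => ?_⟩⟩
    · simpa using h' (k + 1) (by omega)
    · rcases k with _ | k
      · simpa using h
      · simpa using h' k (by omega)
  refine le_antisymm ?_ (le_commonSuffixLen_iff.2 ((step _).2 (le_commonSuffixLen_iff.1 le_rfl)))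
  obtain h0 | hm := Nat.eq_zero_or_eq_succ_pred (commonSuffixLen x (s + 1) (t + 1))
  · omega
  · have := le_commonSuffixLen_iff.2 ((step _).1 (le_commonSuffixLen_iff.1 hm.ge))
    omega

theorem commonSuffixLen_succ_succ_of_ne (h : x (s + 1) ≠ x (t + 1)) :
    commonSuffixLen x (s + 1) (t + 1) = 0 := by
  by_contra h0
  exact h (by simpa using (le_commonSuffixLen_iff.1 (Nat.one_le_iff_ne_zero.2 h0)).2.2 0 one_pos)

end CommonSuffixLen

def IsLastArgmaxOn {ι α : Type*} [Preorder ι] [Preorder α] (f : ι → α) (S : Set ι) (m : ι) :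
    Prop :=
  m ∈ S ∧ ∀ t ∈ S, f t ≤ f m ∧ (m < t → f t < f m)

theorem IsLastArgmaxOn.unique {ι α : Type*} [LinearOrder ι] [Preorder α] {f : ι → α} {S : Set ι}
    {m n : ι} (hm : IsLastArgmaxOn f S m) (hn : IsLastArgmaxOn f S n) : m = n := by
  have h₁ := hm.2 n hn.1
  have h₂ := hn.2 m hm.1
  by_contra hne
  rcases lt_or_gt_of_ne hne with h | h
  · exact (h₁.2 h).not_ge h₂.1
  · exact (h₂.2 h).not_ge h₁.1

section Rule

variable {x : ℕ → Bool} {s t l j m : ℕ}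

theorem le_commonSuffixLen_of_matchAt (h : MatchAt x (s + 1) l j) :
    l ≤ commonSuffixLen x s (j + l - 1) := by
  obtain ⟨hl, hls, hjl, hx⟩ := h
  refine le_commonSuffixLen_iff.2 ⟨by omega, by omega, fun k hk => ?_⟩
  have := hx (l - 1 - k) (by omega)
  rw [show s - k = s + 1 - l + (l - 1 - k) by omega, show j + l - 1 - k = j + (l - 1 - k) by omega]
  exact this.symm

theorem matchAt_of_le_commonSuffixLen (hl : 0 < l) (ht : t < s)
    (h : l ≤ commonSuffixLen x s t) : MatchAt x (s + 1) l (t + 1 - l) := by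
  obtain ⟨hls, hlt, hx⟩ := le_commonSuffixLen_iff.1 h
  refine ⟨hl, hls, by omega, fun k hk => ?_⟩
  have := hx (l - 1 - k) (by omega)
  rw [show t + 1 - l + k = t - (l - 1 - k) by omega, show s + 1 - l + k = s - (l - 1 - k) by omega]
  exact this.symm

/-- The rule defining `IsEM`, read through end positions: the suffix of length `l` matching at `j`
is the common suffix of the prefixes ending at `s` and at `j + l - 1`. -/
theorem IsEM.exists_next (hx : IsEM x) (hs : 2 ≤ s) :
    ∃ m, IsLastArgmaxOn (commonSuffixLen x s) (Set.Iio s) m ∧ x (s + 1) = !x (m + 1) := by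
  obtain ⟨l, j, hmatch, hlongest, hlast, hbit⟩ := hx.2.2.2 (s + 1) (by omega)
  have hl := hmatch.1
  have hjl := hmatch.2.2.1
  have hle : ∀ t < s, commonSuffixLen x s t ≤ l := fun t ht => by
    rcases Nat.eq_zero_or_pos (commonSuffixLen x s t) with h0 | hpos
    · omega
    · exact hlongest _ _ (matchAt_of_le_commonSuffixLen hpos ht le_rfl)
  have hlen : commonSuffixLen x s (j + l - 1) = l :=
    le_antisymm (hle _ (by omega)) (le_commonSuffixLen_of_matchAt hmatch)
  refine ⟨j + l - 1, ⟨by simp only [Set.mem_Iio]; omega,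
    fun t ht => ⟨hlen.symm ▸ hle t ht, fun hjt => ?_⟩⟩, by rw [hbit]; congr 2; omega⟩
  by_contra hge
  have := hlast _ (matchAt_of_le_commonSuffixLen hl ht (by omega))
  omega

theorem IsEM.next_eq (hx : IsEM x) (hs : 2 ≤ s)
    (hm : IsLastArgmaxOn (commonSuffixLen x s) (Set.Iio s) m) : x (s + 1) = !x (m + 1) := by
  obtain ⟨m', hm', hbit⟩ := hx.exists_next hs
  rwa [hm.unique hm']

end Rule

/-- `S` is an initial segment of the end positions of the occurrences of some word of length `L`. -/
def IsFirstOccurrenceEnds (x : ℕ → Bool) (L : ℕ) (S : Set ℕ) : Prop :=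
  ∀ s ∈ S, ∀ t < s, t ∈ S ↔ L ≤ commonSuffixLen x s t

section Steps

variable {x : ℕ → Bool} {L s t m : ℕ} {S : Set ℕ}

theorem isLastArgmaxOn_succ
    (hm : IsLastArgmaxOn (commonSuffixLen x s) {t | t < s ∧ x (t + 1) = x (s + 1)} m) :
    IsLastArgmaxOn (commonSuffixLen x (s + 1)) (Set.Iio (s + 1)) (m + 1) := by
  obtain ⟨⟨hms, hbit⟩, hmax⟩ := hm
  have hlen : commonSuffixLen x (s + 1) (m + 1) = commonSuffixLen x s m + 1 :=
    commonSuffixLen_succ_succ hbit.symm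
  refine ⟨by simp only [Set.mem_Iio]; omega, fun t ht => ?_⟩
  rcases t with _ | t
  · have : commonSuffixLen x (s + 1) 0 ≤ 1 := commonSuffixLen_le_succ_right
    exact ⟨by omega, by omega⟩
  by_cases htb : x (t + 1) = x (s + 1)
  · have := hmax t ⟨by simp only [Set.mem_Iio] at ht; omega, htb⟩
    rw [hlen, commonSuffixLen_succ_succ htb.symm]
    omega
  · rw [commonSuffixLen_succ_succ_of_ne (Ne.symm htb)]
    omega

theorem IsEM.exists_next_mem (hx : IsEM x) (hS : IsFirstOccurrenceEnds x L S) (hs : s ∈ S)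
    (ht : t ∈ S) (hts : t < s) (h2 : 2 ≤ s) :
    ∃ m ∈ S, m < s ∧ IsLastArgmaxOn (commonSuffixLen x s) (Set.Iio s) m ∧
      x (s + 1) = !x (m + 1) := by
  obtain ⟨m, hm, hbit⟩ := hx.exists_next h2
  have hms : m < s := hm.1
  refine ⟨m, (hS s hs m hms).2 ?_, hms, hm, hbit⟩
  exact ((hS s hs t hts).1 ht).trans (hm.2 t hts).1

theorem IsEM.next_succ_eq (hx : IsEM x) (hS : IsFirstOccurrenceEnds x L S) (hs : s ∈ S)
    (hm : IsLastArgmaxOn (commonSuffixLen x s) {t | t ∈ S ∧ t < s ∧ x (t + 1) = x (s + 1)} m) :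
    x (s + 2) = !x (m + 2) := by
  obtain ⟨⟨hmS, hms, hbit⟩, hmax⟩ := hm
  have hL : L ≤ commonSuffixLen x s m := (hS s hs m hms).1 hmS
  refine hx.next_eq (by omega) (isLastArgmaxOn_succ ⟨⟨hms, hbit⟩, fun t ⟨hts, htb⟩ => ?_⟩)
  by_cases htS : t ∈ S
  · exact hmax t ⟨htS, hts, htb⟩
  · have := (hS s hs t hts).not.1 htS
    omega

/-- The rule at `s` copies from an occurrence followed by the other bit, which can only be `o`. -/
theorem IsEM.commonSuffixLen_lt_of_unique_ne {t₀ o : ℕ} (hx : IsEM x)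
    (hS : IsFirstOccurrenceEnds x L S) (hs : s ∈ S) (ht₀ : t₀ ∈ S) (ht₀s : t₀ < s) (h2 : 2 ≤ s)
    (hsame : ∀ m ∈ S, m < s → m ≠ o → x (m + 1) = x (s + 1)) (hot : o < t) (hts : t < s) :
    commonSuffixLen x s t < commonSuffixLen x s o := by
  obtain ⟨m, hmS, hms, hm, hnext⟩ := hx.exists_next_mem hS hs ht₀ ht₀s h2
  obtain rfl : m = o := by
    by_contra hmo
    rw [hsame m hmS hms hmo] at hnext
    exact Bool.self_ne_not _ hnext
  exact (hm.2 t hts).2 hot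

end Steps

theorem IsEM.next_succ_alternate {x : ℕ → Bool} {L o r c d e : ℕ} (hx : IsEM x)
    (hS : IsFirstOccurrenceEnds x L {o, r, c, d, e}) (hoc : o < c) (hrc : r < c) (hcd : c < d)
    (hde : d < e) (hor : commonSuffixLen x o r = L) (ho : x (o + 1) = !x (r + 1))
    (hc : x (c + 1) = x (r + 1)) (hd : x (d + 1) = x (r + 1)) (he : x (e + 1) = x (r + 1)) :
    x (c + 2) = !x (r + 2) ∧ x (d + 2) = !x (c + 2) ∧ x (e + 2) = !x (d + 2) := by
  set S : Set ℕ := {o, r, c, d, e}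
  obtain ⟨hrS, hcS, hdS, heS⟩ : r ∈ S ∧ c ∈ S ∧ d ∈ S ∧ e ∈ S := by simp [S]
  have hsame : ∀ t ∈ S, t ≠ o → x (t + 1) = x (r + 1) := by
    intro t ht hto
    simp only [S, Set.mem_insert_iff, Set.mem_singleton_iff] at ht
    rcases ht with rfl | rfl | rfl | rfl | rfl
    exacts [absurd rfl hto, rfl, hc, hd, he]
  have hforced : ∀ s ∈ S, x (s + 1) = x (r + 1) → c < s → ∀ t, o < t → t < s →
      commonSuffixLen x s t < commonSuffixLen x s o := fun s hs hsr hcs t hot hts =>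
    hx.commonSuffixLen_lt_of_unique_ne hS hs hcS hcs (by omega)
      (fun m hm _ hmo => (hsame m hm hmo).trans hsr.symm) hot hts
  have hdc := hforced d hdS hd hcd c hoc hcd
  have hed := hforced e heS he (by omega) d (by omega) hde
  have hdr := commonSuffixLen_le_of_lt (hor.trans_le ((hS d hdS c hcd).1 hcS)) hdc
  have her := commonSuffixLen_le_of_lt (hor.trans_le ((hS e heS d hde).1 hdS)) hed
  have hecd := commonSuffixLen_lt_of_lt_of_lt hdc (hforced e heS he (by omega) c hoc (by omega)) hed
  have hcandidates : ∀ s, x (s + 1) = x (r + 1) →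
      ∀ t ∈ {t | t ∈ S ∧ t < s ∧ x (t + 1) = x (s + 1)}, t = r ∨ t = c ∨ t = d ∨ t = e := by
    rintro s hs t ⟨ht, -, hts⟩
    simp only [S, Set.mem_insert_iff, Set.mem_singleton_iff] at ht
    rcases ht with rfl | ht
    · exact absurd (hts.trans hs) (ho ▸ Bool.not_ne_self _)
    · exact ht
  refine ⟨hx.next_succ_eq hS hcS ⟨⟨hrS, hrc, hc.symm⟩, fun t ht => ?_⟩,
    hx.next_succ_eq hS hdS ⟨⟨hcS, hcd, hc.trans hd.symm⟩, fun t ht => ?_⟩,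
    hx.next_succ_eq hS heS ⟨⟨hdS, hde, hd.trans he.symm⟩, fun t ht => ?_⟩⟩
  · rcases hcandidates c hc t ht with rfl | rfl | rfl | rfl <;> have := ht.2.1 <;> omega
  · rcases hcandidates d hd t ht with rfl | rfl | rfl | rfl <;> have := ht.2.1 <;> omega
  · rcases hcandidates e he t ht with rfl | rfl | rfl | rfl <;> have := ht.2.1 <;> omega

def IsBalanced (w : List Bool) : Prop :=
  ((w.count false : ℤ) - (w.count true : ℤ)).natAbs ≤ 1

theorem isBalanced_of_not_const {a b c d e : Bool} (hab : b = !a) (h : ¬(c = d ∧ d = e)) :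
    IsBalanced [a, b, c, d, e] := by
  subst hab
  unfold IsBalanced
  revert h
  cases a <;> cases c <;> cases d <;> cases e <;> decide

theorem isBalanced_of_alternate {a b c d e : Bool} (h : a ≠ c ∨ b ≠ c) (hd : d = !c)
    (he : e = !d) : IsBalanced [a, b, c, d, e] := by
  subst hd he
  unfold IsBalanced
  revert h
  cases a <;> cases b <;> cases c <;> decide

theorem IsEM.isBalanced_next_or_next_succ {x : ℕ → Bool} {L a b c d e : ℕ} (hx : IsEM x)
    (hS : IsFirstOccurrenceEnds x L {a, b, c, d, e}) (hab : a < b) (hbc : b < c) (hcd : c < d)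
    (hde : d < e) (hba : commonSuffixLen x b a = L) (hL : 0 < L) :
    IsBalanced [x (a + 1), x (b + 1), x (c + 1), x (d + 1), x (e + 1)] ∨
      IsBalanced [x (a + 2), x (b + 2), x (c + 2), x (d + 2), x (e + 2)] := by
  have hb : 2 ≤ b := by
    by_contra hb
    obtain ⟨rfl, rfl⟩ : a = 0 ∧ b = 1 := by omega
    have h10 := (le_commonSuffixLen_iff.1 (hL.trans_le hba.ge)).2.2 0 one_pos
    simp [hx.1, hx.2.1] at h10
  have hu : x (b + 1) = !x (a + 1) := by
    obtain ⟨m, hmS, hmb, -, hnext⟩ := hx.exists_next_mem hS (by simp) (by simp) hab hb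
    obtain rfl : m = a := by
      simp only [Set.mem_insert_iff, Set.mem_singleton_iff] at hmS
      omega
    exact hnext
  by_cases hconst : x (c + 1) = x (d + 1) ∧ x (d + 1) = x (e + 1)
  · right
    obtain ⟨hucd, hude⟩ := hconst
    rcases Bool.eq_or_eq_not (x (c + 1)) (x (a + 1)) with huc | huc
    · rw [Set.insert_comm] at hS
      obtain ⟨h₁, h₂, h₃⟩ := hx.next_succ_alternate hS hbc (by omega) hcd hde hba hu huc
        (hucd.symm.trans huc) (hude.symm.trans (hucd.symm.trans huc))
      exact isBalanced_of_alternate (.inl (h₁ ▸ Bool.self_ne_not _)) h₂ h₃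
    · rw [← hu] at huc
      obtain ⟨h₁, h₂, h₃⟩ := hx.next_succ_alternate hS (by omega) hbc hcd hde
        (by rw [commonSuffixLen_comm, hba]) (by rw [hu, Bool.not_not]) huc
        (hucd.symm.trans huc) (hude.symm.trans (hucd.symm.trans huc))
      exact isBalanced_of_alternate (.inr (h₁ ▸ Bool.self_ne_not _)) h₂ h₃
  · exact .inl (isBalanced_of_not_const hu hconst)

section Occurrences

variable {x : ℕ → Bool} {B : List Bool} {K p q : ℕ}

theorem occursAt_iff_le_commonSuffixLen (hK : B.length = K + 1) (hp : OccursAt x B p) :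
    OccursAt x B q ↔ K + 1 ≤ commonSuffixLen x (p + K) (q + K) := by
  constructor
  · intro hq
    refine le_commonSuffixLen_iff.2 ⟨by omega, by omega, fun k hk => ?_⟩
    rw [show p + K - k = p + (K - k) by omega, show q + K - k = q + (K - k) by omega]
    exact (hp ⟨K - k, by omega⟩).trans (hq ⟨K - k, by omega⟩).symm
  · intro h k
    have := (le_commonSuffixLen_iff.1 h).2.2 (K - k) (by omega)
    rw [show p + K - (K - k) = p + k by omega, show q + K - (K - k) = q + k by omega] at this
    exact this ▸ hp k

theorem commonSuffixLen_eq_of_prev_complement (hK : B.length = K + 1) (hp : OccursAt x B p)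
    (hq : OccursAt x B q) (hprev : p = 0 ∨ x (p - 1) = !x (q - 1)) :
    commonSuffixLen x (q + K) (p + K) = K + 1 := by
  refine le_antisymm (not_lt.1 fun hlt => ?_) ((occursAt_iff_le_commonSuffixLen hK hq).1 hp)
  obtain ⟨hq1, hp1, hsuffix⟩ := le_commonSuffixLen_iff.1 hlt
  have := hsuffix (K + 1) (by omega)
  rw [show q + K - (K + 1) = q - 1 by omega, show p + K - (K + 1) = p - 1 by omega] at this
  rcases hprev with h | h
  · omega
  · exact Bool.self_ne_not _ (this.trans h)

theorem GoodWord.prev_complement {p₁ p₂ p₃ p₄ p₅ : ℕ} (hgood : GoodWord x B)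
    (h5 : FirstFiveOccs x B p₁ p₂ p₃ p₄ p₅) : p₁ = 0 ∨ x (p₁ - 1) = !x (p₂ - 1) := by
  obtain ⟨i, j, hij, hi, hj, hfirst₂, hprev⟩ := hgood
  obtain ⟨h12, h23, h34, h45, o1, o2, -, -, -, hfirst⟩ := h5
  have hp₁ : p₁ ≤ i := by
    by_contra
    rcases hfirst i (by omega) hi with h | h | h | h <;> omega
  have hjp₂ : j ≤ p₂ := by
    by_contra
    have := hfirst₂ p₁ (by omega) o1
    have := hfirst₂ p₂ (by omega) o2
    omega
  obtain rfl : i = p₁ := by rcases hfirst i (by omega) hi with h | h | h | h <;> omega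
  obtain rfl : j = p₂ := by rcases hfirst j (by omega) hj with h | h | h | h <;> omega
  exact hprev

theorem FirstFiveOccs.isFirstOccurrenceEnds {p₁ p₂ p₃ p₄ p₅ : ℕ}
    (h5 : FirstFiveOccs x B p₁ p₂ p₃ p₄ p₅) (hK : B.length = K + 1) :
    IsFirstOccurrenceEnds x (K + 1) {p₁ + K, p₂ + K, p₃ + K, p₄ + K, p₅ + K} := by
  obtain ⟨h12, h23, h34, h45, o1, o2, o3, o4, o5, hfirst⟩ := h5
  have hocc : ∀ s ∈ ({p₁ + K, p₂ + K, p₃ + K, p₄ + K, p₅ + K} : Set ℕ),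
      ∃ p ≤ p₅, s = p + K ∧ OccursAt x B p := by
    simp only [Set.mem_insert_iff, Set.mem_singleton_iff]
    rintro s (rfl | rfl | rfl | rfl | rfl)
    exacts [⟨p₁, by omega, rfl, o1⟩, ⟨p₂, by omega, rfl, o2⟩, ⟨p₃, by omega, rfl, o3⟩,
      ⟨p₄, by omega, rfl, o4⟩, ⟨p₅, le_rfl, rfl, o5⟩]
  intro s hs t hts
  obtain ⟨p, hp₅, rfl, hp⟩ := hocc s hs
  refine ⟨fun ht => ?_, fun h => ?_⟩
  · obtain ⟨q, -, rfl, hq⟩ := hocc t ht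
    exact (occursAt_iff_le_commonSuffixLen hK hp).1 hq
  · have hKt : K ≤ t := by have := commonSuffixLen_le_succ_right.trans' h; omega
    have hq : OccursAt x B (t - K) :=
      (occursAt_iff_le_commonSuffixLen hK hp).2 (by rwa [Nat.sub_add_cancel hKt])
    simp only [Set.mem_insert_iff, Set.mem_singleton_iff]
    rcases hfirst (t - K) (by omega) hq with h | h | h | h <;> omega

end Occurrences

/-- Proposition 4.1: let `B` be a good word whose first five occurrences start
at `p₁ < ⋯ < p₅` (so they end at positions `a < b < c < d < e` with
`a = p₁ + |B| - 1`, etc.).  Let `u` be the 5-bit word of bits immediately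
following these occurrences and `v` the word of bits two places after.  Then
`|N_u(0) - N_u(1)| ≤ 1` or `|N_v(0) - N_v(1)| ≤ 1`. -/
theorem em_proposition_4_1
    (x : ℕ → Bool) (hx : IsEM x) (B : List Bool) (hB : B ≠ [])
    (hgood : GoodWord x B) (p₁ p₂ p₃ p₄ p₅ : ℕ)
    (h5 : FirstFiveOccs x B p₁ p₂ p₃ p₄ p₅)
    (u v : List Bool)
    (hu : u = [x (p₁ + B.length), x (p₂ + B.length), x (p₃ + B.length),
               x (p₄ + B.length), x (p₅ + B.length)])
    (hv : v = [x (p₁ + B.length + 1), x (p₂ + B.length + 1),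
               x (p₃ + B.length + 1), x (p₄ + B.length + 1),
               x (p₅ + B.length + 1)]) :
    ((u.count false : ℤ) - (u.count true : ℤ)).natAbs ≤ 1 ∨
    ((v.count false : ℤ) - (v.count true : ℤ)).natAbs ≤ 1 := by
  obtain ⟨K, hK⟩ := Nat.exists_eq_add_one_of_ne_zero (List.length_eq_zero_iff.not.2 hB)
  have hS := h5.isFirstOccurrenceEnds hK
  have hfirst := commonSuffixLen_eq_of_prev_complement hK h5.2.2.2.2.1 h5.2.2.2.2.2.1
    (hgood.prev_complement h5)
  obtain ⟨h12, h23, h34, h45, -⟩ := h5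
  subst hu hv
  rw [hK]
  exact hx.isBalanced_next_or_next_succ (a := p₁ + K) (b := p₂ + K) (c := p₃ + K) (d := p₄ + K)
    (e := p₅ + K) hS (by omega) (by omega) (by omega) (by omega) hfirst (Nat.succ_pos K)
end

section
/- A binary word A belongs to R_n (the set of words occurring at least twice in x₁…x_n) if and only if A = b⁺(i) for some position i with i + |b⁺(i)| − 1 ≤ n, where b⁺(i) is the longest word starting at position i whose occurrence at i is at least its second occurrence in the EM sequence. -/
/-- `Rset x n` is the set of binary words occurring at least twice as
substrings of the first `n` bits of `x`. -/
def Rset (x : ℕ → Bool) (n : ℕ) : Set (List Bool) :=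
  {w | ∃ i j, i < j ∧ OccursAt x w i ∧ OccursAt x w j ∧ j + w.length ≤ n}

/-- `w = b⁺(i)`: the longest word starting at position `i` whose occurrence at
`i` is at least its second occurrence in the sequence `x`. -/
def IsBPlus (x : ℕ → Bool) (i : ℕ) (w : List Bool) : Prop :=
  OccursAt x w i ∧ (∃ j, j < i ∧ OccursAt x w j) ∧
  ∀ w' : List Bool, OccursAt x w' i → (∃ j, j < i ∧ OccursAt x w' j) →
    w'.length ≤ w.length

/-- The first two occurrences of a word are followed by complementary bits. -/
lemma em_compl (x : ℕ → Bool) (hx : IsEM x) (A : List Bool) (hA : A ≠ [])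
    (i j : ℕ) (hij : i < j) (hi : OccursAt x A i) (hj : OccursAt x A j)
    (huniq : ∀ p, OccursAt x A p → p < j → p = i) :
    x (j + A.length) = ! x (i + A.length) := by
  set L := A.length with hL
  have hL1 : 1 ≤ L := by
    have : A.length ≠ 0 := by simpa using hA
    omega
  have hn3 : 3 ≤ j + L := by
    by_contra h
    have hj1 : j = 1 := by omega
    have hL1' : L = 1 := by omega
    have hi0 : i = 0 := by omega
    have h01 : x (i + (0 : ℕ)) = x (j + (0 : ℕ)) :=
      (hi ⟨0, by omega⟩).trans (hj ⟨0, by omega⟩).symm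
    rw [hi0, hj1] at h01
    simp only [Nat.add_zero, Nat.zero_add] at h01
    rw [hx.1, hx.2.1] at h01
    exact absurd h01 (by simp)
  obtain ⟨l, j', hm, hmaxl, _, hbit⟩ := hx.2.2.2 (j + L) hn3
  have hmL : MatchAt x (j + L) L i := by
    refine ⟨by omega, by omega, by omega, ?_⟩
    intro k hk
    have h1 : x (i + k) = A.get ⟨k, hk⟩ := hi ⟨k, hk⟩
    have h2 : x (j + k) = A.get ⟨k, hk⟩ := hj ⟨k, hk⟩
    have e : j + L - L + k = j + k := by omega
    rw [e, h1, h2]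
  have hLl : L ≤ l := hmaxl L i hmL
  obtain ⟨hl0, hln, hjl, hmatch⟩ := hm
  set p := j' + l - L with hp
  have hocc : OccursAt x A p := by
    intro k
    have hk : (k : ℕ) < L := k.2
    have h1 := hmatch (l - L + (k : ℕ)) (by omega)
    have e1 : j' + (l - L + (k : ℕ)) = p + (k : ℕ) := by omega
    have e2 : j + L - l + (l - L + (k : ℕ)) = j + (k : ℕ) := by omega
    rw [e1, e2] at h1
    have h2 : x (j + (k : ℕ)) = A.get k := hj k
    rw [h1, h2]
  have hpj : p < j := by omega
  have hpi : p = i := huniq p hocc hpj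
  have he : j' + l = i + L := by omega
  rw [he] at hbit
  exact hbit

/-- A nonempty binary word `A` belongs to `R_n` if and only if `A = b⁺(i)` for
some position `i` such that the occurrence of `b⁺(i)` at `i` lies within the
first `n` bits of the EM sequence. -/
theorem em_mem_Rset_iff_bplus
    (x : ℕ → Bool) (hx : IsEM x) (A : List Bool) (hA : A ≠ []) (n : ℕ) :
    A ∈ Rset x n ↔ ∃ i, IsBPlus x i A ∧ i + A.length ≤ n := by
  classical
  constructor
  · rintro ⟨i, j, hij, hi, hj, hjn⟩
    have hP : ∃ m, OccursAt x A m ∧ ∃ p, p < m ∧ OccursAt x A p :=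
      ⟨j, hj, i, hij, hi⟩
    set j₀ := Nat.find hP with hj₀def
    obtain ⟨hocc0, i₀, hi₀lt, hi₀occ⟩ := Nat.find_spec hP
    have hj₀le : j₀ ≤ j := Nat.find_le ⟨hj, i, hij, hi⟩
    have huniq : ∀ p, OccursAt x A p → p < j₀ → p = i₀ := by
      intro p hpocc hpj
      by_contra hne
      rcases Nat.lt_or_ge p i₀ with h | h
      · have : j₀ ≤ i₀ := Nat.find_le ⟨hi₀occ, p, h, hpocc⟩
        omega
      · have hlt : i₀ < p := lt_of_le_of_ne h (fun e => hne e.symm)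
        have : j₀ ≤ p := Nat.find_le ⟨hpocc, i₀, hlt, hi₀occ⟩
        omega
    refine ⟨j₀, ⟨hocc0, ⟨i₀, hi₀lt, hi₀occ⟩, ?_⟩, by omega⟩
    rintro w' hw'occ ⟨k₀, hk₀lt, hk₀occ⟩
    by_contra hlen
    push_neg at hlen
    have hAk₀ : OccursAt x A k₀ := by
      intro k
      have hk : (k : ℕ) < A.length := k.2
      have h1 : x (k₀ + (k : ℕ)) = w'.get ⟨(k : ℕ), by omega⟩ :=
        hk₀occ ⟨(k : ℕ), by omega⟩
      have h2 : x (j₀ + (k : ℕ)) = w'.get ⟨(k : ℕ), by omega⟩ :=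
        hw'occ ⟨(k : ℕ), by omega⟩
      have h3 : x (j₀ + (k : ℕ)) = A.get k := hocc0 k
      rw [h1, ← h2, h3]
    have hk₀L : x (k₀ + A.length) = x (j₀ + A.length) := by
      have h1 : x (k₀ + A.length) = w'.get ⟨A.length, hlen⟩ :=
        hk₀occ ⟨A.length, hlen⟩
      have h2 : x (j₀ + A.length) = w'.get ⟨A.length, hlen⟩ :=
        hw'occ ⟨A.length, hlen⟩
      rw [h1, h2]
    have hcomp := em_compl x hx A hA i₀ j₀ hi₀lt hi₀occ hocc0 huniq
    rw [huniq k₀ hAk₀ hk₀lt] at hk₀L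
    rw [hk₀L] at hcomp
    simp at hcomp
  · rintro ⟨i, ⟨hocc, ⟨p, hpi, hpocc⟩, _⟩, hlen⟩
    exact ⟨p, i, hpi, hpocc, hocc, hlen⟩
end

section
/- In the Ehrenfeucht–Mycielski sequence, suppose a good word B has at least five occurrences, and the first five occurrences of B are followed by bits giving B(1−a₁), Ba₁, Ba₁, Ba₁, Ba₁. Then the bits following the second through fifth occurrences of B (that is, following the occurrences of Ba₁) alternate, i.e., the five occurrences extend to B(1−a₁), B a₁ a₂, B a₁ (1−a₂), B a₁ a₂, B a₁ (1−a₂), and hence Ba₁ is followed at least twice by each of a₂ and 1−a₂ among these occurrences. -/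
section Aux

variable {x : ℕ → Bool} {B : List Bool}

lemma occ_eq {p q : ℕ} (hp : OccursAt x B p) (hq : OccursAt x B q)
    {m : ℕ} (hm : m < B.length) : x (p + m) = x (q + m) := by
  exact (hp ⟨m, hm⟩).trans (hq ⟨m, hm⟩).symm

lemma lemA (hx : IsEM x) (hL : 0 < B.length)
    {p₁ p₂ p₃ p₄ p₅ : ℕ} (h5 : FirstFiveOccs x B p₁ p₂ p₃ p₄ p₅)
    {a₁ : Bool}
    (h1 : x (p₁ + B.length) = !a₁) (h2 : x (p₂ + B.length) = a₁)
    (h3 : x (p₃ + B.length) = a₁) (h4 : x (p₄ + B.length) = a₁)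
    {p : ℕ} (hpo : OccursAt x B p) (hp2 : p₂ < p) (hp5 : p ≤ p₅)
    (hpa : x (p + B.length) = a₁) :
    ∃ t, 1 ≤ t ∧ t ≤ p₁ ∧ (∀ s, 1 ≤ s → s ≤ t → x (p₁ - s) = x (p - s)) ∧
      ∀ q, OccursAt x B q → p₁ < q → q < p →
        ∃ s, 1 ≤ s ∧ s ≤ t ∧ x (q - s) ≠ x (p - s) := by
  obtain ⟨h12, h23, h34, h45, o1, o2, o3, o4, o5, hu⟩ := h5
  set L := B.length with hLdef
  obtain ⟨l, j, hm, hlmax, hjmax, hbit⟩ := hx.2.2.2 (p + L) (by omega)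
  obtain ⟨hl0, hln, hjln, hmk⟩ := hm
  have hmatch2 : MatchAt x (p + L) L p₂ := by
    refine ⟨hL, by omega, by omega, ?_⟩
    intro k hk
    have e : p + L - L + k = p + k := by omega
    rw [e]
    exact occ_eq o2 hpo hk
  have hLl : L ≤ l := hlmax L p₂ hmatch2
  obtain ⟨q, hq⟩ : ∃ q, j + l = q + L := ⟨j + l - L, by omega⟩
  have hoq : OccursAt x B q := by
    intro k
    have hkL : (k : ℕ) < L := k.isLt
    have h := hmk (l - L + k) (by omega)
    have e1 : j + (l - L + k) = q + k := by omega
    have e2 : p + L - l + (l - L + k) = p + k := by omega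
    rw [e1, e2] at h
    rw [h]
    exact hpo k
  have hqp : q < p := by omega
  rw [hq] at hbit
  rw [hpa] at hbit
  have hqbit : x (q + L) = !a₁ := by rw [hbit]; simp
  have hqp1 : q = p₁ := by
    rcases hu q (by omega) hoq with h | h | h | h
    · exact h
    · rw [h, h2] at hqbit; exact absurd hqbit (by cases a₁ <;> simp)
    · rw [h, h3] at hqbit; exact absurd hqbit (by cases a₁ <;> simp)
    · rw [h, h4] at hqbit; exact absurd hqbit (by cases a₁ <;> simp)
  rw [hqp1] at hq hqp
  have hlL : L < l := by
    rcases Nat.lt_or_ge L l with h | h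
    · exact h
    · exfalso
      have hlL' : l = L := by omega
      have := hjmax p₂ (by rw [hlL']; exact hmatch2)
      omega
  refine ⟨l - L, by omega, by omega, ?_, ?_⟩
  · intro s hs1 hst
    have h := hmk (l - L - s) (by omega)
    have e1 : j + (l - L - s) = p₁ - s := by omega
    have e2 : p + L - l + (l - L - s) = p - s := by omega
    rw [e1, e2] at h
    exact h
  · intro q' hoq' hq1 hq2
    by_contra hcon
    push_neg at hcon
    have hmatch' : MatchAt x (p + L) l (q' - (l - L)) := by
      refine ⟨hl0, by omega, by omega, ?_⟩
      intro k hk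
      rcases Nat.lt_or_ge k (l - L) with hkt | hkt
      · have h := hcon (l - L - k) (by omega) (by omega)
        have e1 : q' - (l - L) + k = q' - (l - L - k) := by omega
        have e2 : p + L - l + k = p - (l - L - k) := by omega
        rw [e1, e2]
        exact h
      · have e1 : q' - (l - L) + k = q' + (k - (l - L)) := by omega
        have e2 : p + L - l + k = p + (k - (l - L)) := by omega
        rw [e1, e2]
        exact occ_eq hoq' hpo (by omega)
    have := hjmax _ hmatch'
    omega

lemma lemB (hx : IsEM x) (hL : 0 < B.length)
    {p₁ p₂ p₃ p₄ p₅ : ℕ} (h5 : FirstFiveOccs x B p₁ p₂ p₃ p₄ p₅)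
    {a₁ : Bool}
    (h1 : x (p₁ + B.length) = !a₁) (h2 : x (p₂ + B.length) = a₁)
    (h3 : x (p₃ + B.length) = a₁) (h4 : x (p₄ + B.length) = a₁)
    {p : ℕ} (hpo : OccursAt x B p) (hp2 : p₂ < p) (hp5 : p ≤ p₅)
    (hpa : x (p + B.length) = a₁) :
    ∃ q t, OccursAt x B q ∧ (q = p₂ ∨ q = p₃ ∨ q = p₄) ∧ q < p ∧ t ≤ q ∧
      x (p + B.length + 1) = !x (q + B.length + 1) ∧
      (∀ s, 1 ≤ s → s ≤ t → x (q - s) = x (p - s)) ∧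
      ∀ q', OccursAt x B q' → q < q' → q' < p → x (q' + B.length) = a₁ →
        ∃ s, 1 ≤ s ∧ s ≤ t ∧ x (q' - s) ≠ x (p - s) := by
  obtain ⟨h12, h23, h34, h45, o1, o2, o3, o4, o5, hu⟩ := h5
  set L := B.length with hLdef
  obtain ⟨l, j, hm, hlmax, hjmax, hbit⟩ := hx.2.2.2 (p + L + 1) (by omega)
  obtain ⟨hl0, hln, hjln, hmk⟩ := hm
  have hmatch2 : MatchAt x (p + L + 1) (L + 1) p₂ := by
    refine ⟨by omega, by omega, by omega, ?_⟩
    intro k hk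
    have e : p + L + 1 - (L + 1) + k = p + k := by omega
    rw [e]
    rcases Nat.lt_or_ge k L with h | h
    · exact occ_eq o2 hpo h
    · have hkL : k = L := by omega
      rw [hkL, h2, hpa]
  have hLl : L + 1 ≤ l := hlmax (L + 1) p₂ hmatch2
  obtain ⟨q, hq⟩ : ∃ q, j + l = q + L + 1 := ⟨j + l - L - 1, by omega⟩
  have hqp : q < p := by omega
  have hoq : OccursAt x B q := by
    intro k
    have hkL : (k : ℕ) < L := k.isLt
    have h := hmk (l - L - 1 + k) (by omega)
    have e1 : j + (l - L - 1 + k) = q + k := by omega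
    have e2 : p + L + 1 - l + (l - L - 1 + k) = p + k := by omega
    rw [e1, e2] at h
    rw [h]
    exact hpo k
  have hqa : x (q + L) = a₁ := by
    have h := hmk (l - 1) (by omega)
    have e1 : j + (l - 1) = q + L := by omega
    have e2 : p + L + 1 - l + (l - 1) = p + L := by omega
    rw [e1, e2] at h
    rw [h, hpa]
  have hqc : q = p₂ ∨ q = p₃ ∨ q = p₄ := by
    rcases hu q (by omega) hoq with h | h | h | h
    · exfalso; rw [h, h1] at hqa; exact absurd hqa (by cases a₁ <;> simp)
    · exact Or.inl h
    · exact Or.inr (Or.inl h)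
    · exact Or.inr (Or.inr h)
  rw [hq] at hbit
  refine ⟨q, l - L - 1, hoq, hqc, hqp, by omega, hbit, ?_, ?_⟩
  · intro s hs1 hst
    have h := hmk (l - L - 1 - s) (by omega)
    have e1 : j + (l - L - 1 - s) = q - s := by omega
    have e2 : p + L + 1 - l + (l - L - 1 - s) = p - s := by omega
    rw [e1, e2] at h
    exact h
  · intro q' hoq' hq1 hq2 hq'a
    by_contra hcon
    push_neg at hcon
    have hmatch' : MatchAt x (p + L + 1) l (q' - (l - L - 1)) := by
      refine ⟨hl0, by omega, by omega, ?_⟩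
      intro k hk
      rcases Nat.lt_or_ge k (l - L - 1) with hkt | hkt
      · have h := hcon (l - L - 1 - k) (by omega) (by omega)
        have e1 : q' - (l - L - 1) + k = q' - (l - L - 1 - k) := by omega
        have e2 : p + L + 1 - l + k = p - (l - L - 1 - k) := by omega
        rw [e1, e2]
        exact h
      · rcases Nat.lt_or_ge (k - (l - L - 1)) L with hm' | hm'
        · have e1 : q' - (l - L - 1) + k = q' + (k - (l - L - 1)) := by omega
          have e2 : p + L + 1 - l + k = p + (k - (l - L - 1)) := by omega
          rw [e1, e2]
          exact occ_eq hoq' hpo hm'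
        · have hkL : k = l - L - 1 + L := by omega
          have e1 : q' - (l - L - 1) + k = q' + L := by omega
          have e2 : p + L + 1 - l + k = p + L := by omega
          rw [e1, e2, hq'a, hpa]
    have := hjmax _ hmatch'
    omega

lemma good_pre (hgood : GoodWord x B)
    {p₁ p₂ p₃ p₄ p₅ : ℕ} (h5 : FirstFiveOccs x B p₁ p₂ p₃ p₄ p₅)
    (hp₁ : 1 ≤ p₁) : x (p₁ - 1) = !x (p₂ - 1) := by
  obtain ⟨i, j, hij, hiB, hjB, huniq, hc⟩ := hgood
  obtain ⟨h12, h23, h34, h45, o1, o2, o3, o4, o5, hu⟩ := h5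
  have hjp2 : j ≤ p₂ := by
    by_contra h
    push_neg at h
    have e1 := huniq p₁ (by omega) o1
    have e2 := huniq p₂ h o2
    omega
  have hi : i = p₁ := by
    rcases hu i (by omega) hiB with h | h | h | h <;> omega
  have hj : j = p₂ := by
    rcases hu j (by omega) hjB with h | h | h | h <;> omega
  rcases hc with h | h
  · omega
  · rw [hi, hj] at h
    exact h

end Aux

/-- Case (a) in the proof of Corollary 4.1: if a good word `B` has at least
five occurrences, the first of which is followed by `!a₁` and the second
through fifth of which are followed by `a₁`, then the bits following those
occurrences of `Ba₁` alternate: the five occurrences extend to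
`B(1-a₁), Ba₁a₂, Ba₁(1-a₂), Ba₁a₂, Ba₁(1-a₂)` where `a₂` is the bit two
places after the second occurrence; in particular `Ba₁` is followed at least
twice by each of `a₂` and `1-a₂` among these occurrences. -/
theorem em_corollary_4_1_case_a
    (x : ℕ → Bool) (hx : IsEM x) (B : List Bool) (hB : B ≠ [])
    (hgood : GoodWord x B) (p₁ p₂ p₃ p₄ p₅ : ℕ)
    (h5 : FirstFiveOccs x B p₁ p₂ p₃ p₄ p₅)
    (a₁ : Bool)
    (h1 : x (p₁ + B.length) = !a₁)
    (h2 : x (p₂ + B.length) = a₁)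
    (h3 : x (p₃ + B.length) = a₁)
    (h4 : x (p₄ + B.length) = a₁)
    (h5' : x (p₅ + B.length) = a₁) :
    x (p₃ + B.length + 1) = !x (p₂ + B.length + 1) ∧
    x (p₄ + B.length + 1) = x (p₂ + B.length + 1) ∧
    x (p₅ + B.length + 1) = !x (p₂ + B.length + 1) := by
  have hL : 0 < B.length := List.length_pos_iff.mpr hB
  obtain ⟨h12, h23, h34, h45, o1, o2, o3, o4, o5, hu⟩ := id h5
  set L := B.length with hLdef
  -- Anchor lemma at steps p₃+L, p₄+L, p₅+L
  obtain ⟨t₃, ht₃1, ht₃p, hmat₃, hmis₃⟩ :=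
    lemA hx hL h5 h1 h2 h3 h4 o3 h23 (by omega) h3
  obtain ⟨t₄, ht₄1, ht₄p, hmat₄, hmis₄⟩ :=
    lemA hx hL h5 h1 h2 h3 h4 o4 (by omega) (by omega) h4
  obtain ⟨t₅, ht₅1, ht₅p, hmat₅, hmis₅⟩ :=
    lemA hx hL h5 h1 h2 h3 h4 o5 (by omega) (le_refl _) h5'
  have hp₁ : 1 ≤ p₁ := by omega
  have hgp : x (p₁ - 1) = !x (p₂ - 1) := good_pre hgood h5 hp₁
  have hp41 : x (p₁ - 1) = x (p₄ - 1) := hmat₄ 1 le_rfl ht₄1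
  have hp51 : x (p₁ - 1) = x (p₅ - 1) := hmat₅ 1 le_rfl ht₅1
  -- Step p₃ + L + 1
  obtain ⟨q3, tq3, hoq3, hqc3, hqlt3, htq3, hbit3, hmat3B, hmis3B⟩ :=
    lemB hx hL h5 h1 h2 h3 h4 o3 h23 (by omega) h3
  have hq3 : q3 = p₂ := by rcases hqc3 with h | h | h <;> omega
  rw [hq3] at hbit3
  -- Step p₄ + L + 1
  obtain ⟨q4, tq4, hoq4, hqc4, hqlt4, htq4, hbit4, hmat4B, hmis4B⟩ :=
    lemB hx hL h5 h1 h2 h3 h4 o4 (by omega) (by omega) h4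
  have hq4 : q4 = p₃ := by
    rcases hqc4 with h | h | h
    · exfalso
      obtain ⟨s, hs1, hst, hne⟩ := hmis4B p₃ o3 (by omega) h34 h3
      have e := hmat4B 1 le_rfl (by omega)
      rw [h] at e
      have he : x (p₂ - 1) = !x (p₂ - 1) := by
        calc x (p₂ - 1) = x (p₄ - 1) := e
          _ = x (p₁ - 1) := hp41.symm
          _ = !x (p₂ - 1) := hgp
      exact absurd he (by cases x (p₂ - 1) <;> simp)
    · exact h
    · omega
  rw [hq4] at hbit4
  have goal2 : x (p₄ + L + 1) = x (p₂ + L + 1) := by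
    rw [hbit4, hbit3]; simp; rfl
  -- Step p₅ + L + 1
  obtain ⟨q5, tq5, hoq5, hqc5, hqlt5, htq5, hbit5, hmat5B, hmis5B⟩ :=
    lemB hx hL h5 h1 h2 h3 h4 o5 (by omega) (le_refl _) h5'
  have hq5 : q5 = p₄ := by
    rcases hqc5 with h | h | h
    · exfalso
      obtain ⟨s, hs1, hst, hne⟩ := hmis5B p₃ o3 (by omega) (by omega) h3
      have e := hmat5B 1 le_rfl (by omega)
      rw [h] at e
      have he : x (p₂ - 1) = !x (p₂ - 1) := by
        calc x (p₂ - 1) = x (p₅ - 1) := e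
          _ = x (p₁ - 1) := hp51.symm
          _ = !x (p₂ - 1) := hgp
      exact absurd he (by cases x (p₂ - 1) <;> simp)
    · -- q5 = p₃ : the proximity monotonicity contradiction
      exfalso
      rw [h] at hmat5B hmis5B
      obtain ⟨s₄, hs₄1, hs₄t, hne₄⟩ := hmis5B p₄ o4 h34 h45 h4
      have hex : ∃ s, 1 ≤ s ∧ x (p₄ - s) ≠ x (p₅ - s) := ⟨s₄, hs₄1, hne₄⟩
      classical
      have hs₀spec := Nat.find_spec hex
      set s₀ := Nat.find hex with hs₀def
      obtain ⟨hs₀1, hs₀ne⟩ := hs₀spec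
      have hs₀le : s₀ ≤ s₄ := Nat.find_min' hex ⟨hs₄1, hne₄⟩
      have hmin : ∀ s, 1 ≤ s → s < s₀ → x (p₄ - s) = x (p₅ - s) := by
        intro s h1s hss
        by_contra hne
        exact (Nat.find_min hex hss) ⟨h1s, hne⟩
      have hs₀2 : 2 ≤ s₀ := by
        by_contra h'
        have : s₀ = 1 := by omega
        rw [this] at hs₀ne
        exact hs₀ne (by rw [← hp41, hp51])
      obtain ⟨s₁, hs₁1, hs₁t, hne₁⟩ := hmis₅ p₃ o3 (by omega) (by omega)
      have hs₁gt : tq5 < s₁ := by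
        by_contra h'
        push_neg at h'
        exact hne₁ (hmat5B s₁ hs₁1 h')
      have h15 : x (p₁ - s₀) = x (p₅ - s₀) := hmat₅ s₀ (by omega) (by omega)
      obtain ⟨s₃, hs₃1, hs₃t, hne₃⟩ := hmis₄ p₃ o3 (by omega) h34
      have hs₃ge : s₀ ≤ s₃ := by
        by_contra h'
        push_neg at h'
        apply hne₃
        have e5 : x (p₃ - s₃) = x (p₅ - s₃) := hmat5B s₃ hs₃1 (by omega)
        have e4 : x (p₄ - s₃) = x (p₅ - s₃) := hmin s₃ hs₃1 h'
        rw [e5, ← e4]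
      have h14 : x (p₁ - s₀) = x (p₄ - s₀) := hmat₄ s₀ (by omega) (by omega)
      exact hs₀ne (by rw [← h14, h15])
    · exact h
  rw [hq5] at hbit5
  refine ⟨hbit3, goal2, ?_⟩
  rw [hbit5, goal2]
end

section
/- In the Ehrenfeucht–Mycielski sequence, every matched string that is matched at its second occurrence belongs to R_n: specifically, if at generation step j the matched suffix is x_i…x_j and this is the second occurrence of that word, then b⁺(i) = x_i…x_j, and hence x_i…x_j ∈ R_n for all n ≥ j. -/
/-- `l` is the length of the longest suffix match used at generation step `n`. -/
def MaxMatchLen (x : ℕ → Bool) (n l : ℕ) : Prop :=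
  (∃ j, MatchAt x n l j) ∧ ∀ l' j, MatchAt x n l' j → l' ≤ l

/-- The substring of `x` of length `l` starting at position `i`. -/
def window (x : ℕ → Bool) (i l : ℕ) : List Bool :=
  (List.range l).map fun k => x (i + k)


/-
The bit appended at step `n` is the complement of the bit following the previous occurrence of the
matched suffix `w = x[n-l, n)`. If that previous occurrence at `j` is the only earlier one, then any
longer word starting at `n - l` and occurring before would have to occur at `j` as well, yet it
continues differently there at position `l`. Hence `w` is the longest repeated word at `n - l`,
and its two occurrences lie inside the first `n` bits.
-/

@[simp]
lemma window_length (x : ℕ → Bool) (i l : ℕ) : (window x i l).length = l := by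
  simp [window]

lemma occursAt_window_iff (x : ℕ → Bool) (i l j : ℕ) :
    OccursAt x (window x i l) j ↔ ∀ k < l, x (j + k) = x (i + k) := by
  simp [OccursAt, window, Fin.forall_iff]

lemma occursAt_window_self (x : ℕ → Bool) (i l : ℕ) : OccursAt x (window x i l) i :=
  (occursAt_window_iff x i l i).2 fun _ _ => rfl

lemma OccursAt.occursAt_window {x : ℕ → Bool} {w : List Bool} {i j l : ℕ}
    (hi : OccursAt x w i) (hj : OccursAt x w j) (hl : l ≤ w.length) :
    OccursAt x (window x i l) j :=
  (occursAt_window_iff x i l j).2 fun k hk =>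
    (hj ⟨k, by omega⟩).trans (hi ⟨k, by omega⟩).symm

lemma MatchAt.occursAt_window {x : ℕ → Bool} {n l j : ℕ} (h : MatchAt x n l j) :
    OccursAt x (window x (n - l) l) j :=
  (occursAt_window_iff x _ l j).2 h.2.2.2

lemma IsEM.exists_matchAt_complement {x : ℕ → Bool} (hx : IsEM x) {n l : ℕ} (hn : 3 ≤ n)
    (hmax : MaxMatchLen x n l) : ∃ j, MatchAt x n l j ∧ x n = !x (j + l) := by
  obtain ⟨L, j, hmatch, hLmax, -, hbit⟩ := hx.2.2.2 n hn
  obtain ⟨⟨j₁, hmatch₁⟩, hlmax⟩ := hmax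
  obtain rfl : L = l := le_antisymm (hlmax L j hmatch) (hLmax l j₁ hmatch₁)
  exact ⟨j, hmatch, hbit⟩

lemma isBPlus_window_of_unique_of_ne {x : ℕ → Bool} {i l j : ℕ} (hj : j < i)
    (hocc : OccursAt x (window x i l) j)
    (huniq : ∀ k < i, OccursAt x (window x i l) k → k = j)
    (hne : x (i + l) ≠ x (j + l)) : IsBPlus x i (window x i l) := by
  refine ⟨occursAt_window_self x i l, ⟨j, hj, hocc⟩, ?_⟩
  rintro w hwi ⟨k, hk, hwk⟩
  by_contra! hlen
  rw [window_length] at hlen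
  obtain rfl : k = j := huniq k hk (hwi.occursAt_window hwk hlen.le)
  exact hne ((hwi ⟨l, hlen⟩).trans (hwk ⟨l, hlen⟩).symm)

lemma window_mem_Rset {x : ℕ → Bool} {i l j m : ℕ} (hj : j < i)
    (hocc : OccursAt x (window x i l) j) (hm : i + l ≤ m) : window x i l ∈ Rset x m :=
  ⟨j, i, hj, hocc, occursAt_window_self x i l, by rwa [window_length]⟩

/-- Every matched string that is matched at its second occurrence belongs to
`R_n`: if at generation step `n` the matched suffix is the length-`l` window
starting at `n - l` and this is the second occurrence of that word (there is
exactly one earlier occurrence), then `b⁺(n - l)` is that word, and hence the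
word belongs to `R_m` for every `m ≥ n`. -/
theorem em_matched_second_occurrence_mem_Rset
    (x : ℕ → Bool) (hx : IsEM x) (n l : ℕ) (hn : 3 ≤ n)
    (hmax : MaxMatchLen x n l)
    (hsecond : ∃ j₀, j₀ < n - l ∧ OccursAt x (window x (n - l) l) j₀ ∧
      ∀ k, k < n - l → OccursAt x (window x (n - l) l) k → k = j₀) :
    IsBPlus x (n - l) (window x (n - l) l) ∧
    ∀ m, n ≤ m → window x (n - l) l ∈ Rset x m := by
  obtain ⟨j, hmatch, hbit⟩ := hx.exists_matchAt_complement hn hmax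
  have hocc := hmatch.occursAt_window
  obtain ⟨-, hln, hjl, -⟩ := hmatch
  have hj : j < n - l := by omega
  obtain ⟨j₀, -, -, huniq⟩ := hsecond
  have huniq' : ∀ k < n - l, OccursAt x (window x (n - l) l) k → k = j := fun k hk hk' =>
    (huniq k hk hk').trans (huniq j hj hocc).symm
  have hne : x (n - l + l) ≠ x (j + l) := by
    rw [Nat.sub_add_cancel hln, hbit]
    exact Bool.not_ne_self _
  exact ⟨isBPlus_window_of_unique_of_ne hj hocc huniq' hne,
    fun m hm => window_mem_Rset hj hocc (by omega)⟩
end
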